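/- arXiv:1712.02522 — 8 statements merged into one kernel-verified Lean document; each statement's English description precedes it below -/
import Mathlib

section
/- Let a > 0 and b be coprime integers, and let f : ℕ → ℕ satisfy f(aq + r) ≥ f(r) - bq for all integers 0 ≤ r < a and q ≥ 1. Then ⟨a⟩ + {af(y) + by : y ∈ ℕ} = ⟨a⟩ ⊕ {af(r) + br : 0 ≤ r < a}, where the right-hand sum is direct. -/
/-- Any element a*m + a*f(y)+b*y can be rewritten with residue r < a. -/
lemma stmt_8_aux (a : ℕ) (ha : 0 < a) (b : ℤ)
    (f : ℕ → ℕ)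
    (hf : ∀ r < a, ∀ q : ℕ, 1 ≤ q → (f r : ℤ) - b * q ≤ (f (a * q + r) : ℤ))
    (m y : ℕ) :
    ∃ m' r : ℕ, r < a ∧
      (a : ℤ) * m + ((a : ℤ) * f y + b * y) = a * m' + ((a : ℤ) * f r + b * r) := by
  set r := y % a with hr
  set q := y / a with hq
  have hra : r < a := Nat.mod_lt _ ha
  have hy : y = a * q + r := (Nat.div_add_mod y a).symm ▸ by omega
  rcases Nat.eq_zero_or_pos q with hq0 | hq1
  · exact ⟨m, r, hra, by rw [hy, hq0]; push_cast; ring⟩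
  · have hd : (0 : ℤ) ≤ (f y : ℤ) - f r + b * q := by
      have := hf r hra q hq1
      rw [← hy] at this
      linarith
    refine ⟨m + ((f y : ℤ) - f r + b * q).toNat, r, hra, ?_⟩
    push_cast [Int.toNat_of_nonneg hd]
    have : (y : ℤ) = a * q + r := by exact_mod_cast hy
    rw [this]; ring

/-- Residue reduction: for coprime a > 0 and b with f(aq + r) ≥ f(r) - bq,
⟨a⟩ + {a f(y) + b y : y ∈ ℕ} = ⟨a⟩ ⊕ {a f(r) + b r : 0 ≤ r < a}, a direct sum. -/
theorem stmt_8 (a : ℕ) (ha : 0 < a) (b : ℤ) (hab : IsCoprime (a : ℤ) b)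
    (f : ℕ → ℕ)
    (hf : ∀ r < a, ∀ q : ℕ, 1 ≤ q → (f r : ℤ) - b * q ≤ (f (a * q + r) : ℤ))
    (hnn : ∀ y : ℕ, 0 ≤ (a : ℤ) * f y + b * y) :
    ({z : ℤ | ∃ m y : ℕ, z = a * m + ((a : ℤ) * f y + b * y)} =
      {z : ℤ | ∃ m r : ℕ, r < a ∧ z = a * m + ((a : ℤ) * f r + b * r)}) ∧
    ∀ z : ℤ, (∃ m y : ℕ, z = a * m + ((a : ℤ) * f y + b * y)) →
      ∃! p : ℕ × ℕ, p.2 < a ∧ z = a * p.1 + ((a : ℤ) * f p.2 + b * p.2) := by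
  have key : ∀ m y : ℕ, ∃ m' r : ℕ, r < a ∧
      (a : ℤ) * m + ((a : ℤ) * f y + b * y) = a * m' + ((a : ℤ) * f r + b * r) :=
    stmt_8_aux a ha b f hf
  have uniq : ∀ (m r m' r' : ℕ), r < a → r' < a →
      (a : ℤ) * m + ((a : ℤ) * f r + b * r) = a * m' + ((a : ℤ) * f r' + b * r') →
      m = m' ∧ r = r' := by
    intro m r m' r' hrA hr'A heq
    have hdvd : (a : ℤ) ∣ b * ((r : ℤ) - r') := by
      refine ⟨(m' : ℤ) + f r' - m - f r, ?_⟩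
      linarith
    have hdr : (a : ℤ) ∣ ((r : ℤ) - r') := by
      rcases hab.dvd_of_dvd_mul_left (by rwa [mul_comm] at hdvd) with ⟨c, hc⟩
      exact ⟨c, hc⟩
    have hrr : (r : ℤ) = r' := by
      rcases hdr with ⟨c, hc⟩
      have h1 : |(r : ℤ) - r'| < a := by
        rw [abs_lt]
        constructor <;> [push_cast; push_cast] <;> omega
      by_contra hne
      have hne0 : (r : ℤ) - r' ≠ 0 := fun h => hne (by linarith)
      have := Int.le_of_dvd (abs_pos.mpr hne0) ((dvd_abs _ _).mpr ⟨c, hc⟩)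
      omega
    have hr2 : r = r' := by exact_mod_cast hrr
    subst hr2
    have : (a : ℤ) * m = a * m' := by linarith
    have := mul_left_cancel₀ (show (a : ℤ) ≠ 0 by exact_mod_cast ha.ne') this
    exact ⟨by exact_mod_cast this, rfl⟩
  constructor
  · ext z
    simp only [Set.mem_setOf_eq]
    constructor
    · rintro ⟨m, y, rfl⟩
      obtain ⟨m', r, hrA, h⟩ := key m y
      exact ⟨m', r, hrA, h⟩
    · rintro ⟨m, r, hrA, rfl⟩
      exact ⟨m, r, rfl⟩
  · rintro z ⟨m, y, rfl⟩
    obtain ⟨m', r, hrA, h⟩ := key m y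
    refine ⟨(m', r), ⟨hrA, h⟩, ?_⟩
    rintro ⟨m2, r2⟩ ⟨hr2A, h2⟩
    obtain ⟨hm, hr⟩ := uniq m2 r2 m' r hr2A hrA (by rw [← h2, ← h])
    simp [hm, hr]
end

section
/- Let h, a, k be positive integers and d an integer with gcd(a,d) = 1 and a + kd > 0. Then ⟨a⟩ + ⟨ha+d⟩ + ⟨ha+2d⟩ + ... + ⟨ha+kd⟩ = ⟨a⟩ ⊕ { ha·⌈r/k⌉ + dr : 0 ≤ r < a }, where the sum on the right is direct. In particular, the Apéry set of ⟨a, ha+d, ..., ha+kd⟩ with respect to a is { ha·⌈r/k⌉ + dr : 0 ≤ r < a }. -/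
/-!
A combination `a x₀ + ∑ (ha + id) xᵢ` equals `a x₀ + ha t + d u` with `t = ∑ xᵢ` and
`u = ∑ i xᵢ ≤ k t`. Dividing `u = a q + r`, it is `a (x₀ + h (t - ⌈r/k⌉) + d q) + (ha ⌈r/k⌉ + d r)`,
and the coefficient of `a` is nonnegative because `⌈r/k⌉ + ⌊aq/k⌋ ≤ ⌈u/k⌉ ≤ t` and `kd > -a`.
Conversely, writing `r = k q + s` with `1 ≤ s ≤ k`, `ha ⌈r/k⌉ + d r` is the generator `ha + sd`
plus `q` copies of `ha + kd`. Since `a` and `d` are coprime, `r` is determined by the residue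
modulo `a`, which makes the sum direct.
-/

def linComb (h a k : ℕ) (d : ℤ) (x : ℕ → ℕ) : ℤ :=
  a * x 0 + ∑ i ∈ Finset.Icc 1 k, ((h * a : ℤ) + i * d) * x i

-- `r ⌈/⌉ k` unfolds to `(r + k - 1) / k`, the form in the statement.
def aperyElt (h a k : ℕ) (d : ℤ) (r : ℕ) : ℤ :=
  (h * a : ℤ) * (r ⌈/⌉ k : ℕ) + d * r

lemma sum_add_mul_mul (s : Finset ℕ) (b d : ℤ) (x : ℕ → ℕ) :
    ∑ i ∈ s, (b + i * d) * x i = b * (∑ i ∈ s, x i : ℕ) + d * (∑ i ∈ s, i * x i : ℕ) := by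
  push_cast
  rw [Finset.mul_sum, Finset.mul_sum, ← Finset.sum_add_distrib]
  exact Finset.sum_congr rfl fun i _ => by ring

lemma sum_Icc_mul_le (k : ℕ) (x : ℕ → ℕ) :
    ∑ i ∈ Finset.Icc 1 k, i * x i ≤ k * ∑ i ∈ Finset.Icc 1 k, x i := by
  rw [Finset.mul_sum]
  exact Finset.sum_le_sum fun i hi => Nat.mul_le_mul_right _ (Finset.mem_Icc.mp hi).2

lemma Nat.ceilDiv_add_div_le {k : ℕ} (hk : 0 < k) (x y : ℕ) : x ⌈/⌉ k + y / k ≤ (x + y) ⌈/⌉ k := by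
  simp only [Nat.ceilDiv_eq_add_pred_div]
  calc (x + k - 1) / k + y / k ≤ (x + k - 1 + y) / k := Nat.div_add_div_le_add_div
    _ = (x + y + k - 1) / k := by congr 1; omega

lemma Nat.exists_sum_Icc_eq_ceilDiv {k : ℕ} (hk : 0 < k) (r : ℕ) :
    ∃ y : ℕ → ℕ, ∑ i ∈ Finset.Icc 1 k, y i = r ⌈/⌉ k ∧ ∑ i ∈ Finset.Icc 1 k, i * y i = r := by
  rcases Nat.eq_zero_or_pos r with rfl | hr
  · exact ⟨0, by simp⟩
  obtain ⟨q, s, hs, hr, hceil⟩ : ∃ q s, s ∈ Finset.Icc 1 k ∧ r = k * q + s ∧ r ⌈/⌉ k = q + 1 := by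
    refine ⟨(r - 1) / k, (r - 1) % k + 1, Finset.mem_Icc.mpr ⟨by omega, Nat.mod_lt _ hk⟩,
      by have := Nat.div_add_mod (r - 1) k; omega, ?_⟩
    rw [Nat.ceilDiv_eq_add_pred_div, show r + k - 1 = r - 1 + 1 * k by omega,
      Nat.add_mul_div_right _ _ hk]
  have hk' : k ∈ Finset.Icc 1 k := Finset.mem_Icc.mpr ⟨hk, le_rfl⟩
  refine ⟨fun i => (if i = k then q else 0) + (if i = s then 1 else 0), ?_, ?_⟩
  · simp [Finset.sum_add_distrib, Finset.sum_ite_eq', hs, hk', hceil]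
  · simp [Finset.sum_add_distrib, mul_add, Finset.sum_ite_eq', hs, hk', hr]

lemma zero_le_mul_div_add_mul {h a k : ℕ} {d : ℤ} (hh : 0 < h) (hk : 0 < k)
    (hpos : 0 < (a : ℤ) + k * d) (q : ℕ) : 0 ≤ (h : ℤ) * ((a * q) / k : ℕ) + d * q := by
  set f := (a * q) / k
  have hf : (a * q : ℤ) < k * (f + 1) := by exact_mod_cast Nat.lt_mul_div_succ _ hk
  have hdq : -(a * q : ℤ) ≤ k * d * q := by nlinarith
  have hhf : (f : ℤ) ≤ h * f := le_mul_of_one_le_left (by positivity) (by exact_mod_cast hh)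
  have : -(k : ℤ) < k * (h * f + d * q) := by nlinarith
  by_contra! hneg
  nlinarith

section

variable {h a k : ℕ} {d : ℤ}

lemma linComb_eq (x : ℕ → ℕ) :
    linComb h a k d x = a * x 0 + (h * a : ℤ) * (∑ i ∈ Finset.Icc 1 k, x i : ℕ) +
      d * (∑ i ∈ Finset.Icc 1 k, i * x i : ℕ) := by
  rw [linComb, sum_add_mul_mul, add_assoc]

lemma exists_linComb_eq (hk : 0 < k) (m r : ℕ) :
    ∃ x, linComb h a k d x = a * m + aperyElt h a k d r := by
  obtain ⟨y, hy, hiy⟩ := Nat.exists_sum_Icc_eq_ceilDiv hk r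
  have hy0 : ∀ i ∈ Finset.Icc 1 k, Function.update y 0 m i = y i := fun i hi =>
    Function.update_of_ne (by have := (Finset.mem_Icc.mp hi).1; omega) _ _
  have hsum : ∑ i ∈ Finset.Icc 1 k, Function.update y 0 m i = r ⌈/⌉ k :=
    (Finset.sum_congr rfl hy0).trans hy
  have hisum : ∑ i ∈ Finset.Icc 1 k, i * Function.update y 0 m i = r :=
    (Finset.sum_congr rfl fun i hi => by rw [hy0 i hi]).trans hiy
  refine ⟨Function.update y 0 m, ?_⟩
  rw [linComb_eq, hsum, hisum, Function.update_self, aperyElt, add_assoc]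

lemma exists_mul_add_aperyElt_eq (hh : 0 < h) (ha : 0 < a) (hk : 0 < k)
    (hpos : 0 < (a : ℤ) + k * d) (x₀ : ℕ) {t u : ℕ} (hut : u ≤ k * t) :
    ∃ m r : ℕ, r < a ∧ a * x₀ + (h * a : ℤ) * t + d * u = a * m + aperyElt h a k d r := by
  have hu : u % a + a * (u / a) = u := Nat.mod_add_div u a
  have huZ : (u : ℤ) = (u % a : ℕ) + a * (u / a : ℕ) := by exact_mod_cast hu.symm
  have hcf : u % a ⌈/⌉ k + (a * (u / a)) / k ≤ t :=
    (Nat.ceilDiv_add_div_le hk _ _).trans <| by rwa [hu, ceilDiv_le_iff_le_mul hk]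
  have hM : 0 ≤ (x₀ : ℤ) + h * ((t : ℤ) - (u % a ⌈/⌉ k : ℕ)) + d * (u / a : ℕ) := by
    have := zero_le_mul_div_add_mul hh hk hpos (u / a)
    have : (h : ℤ) * ((a * (u / a)) / k : ℕ) ≤ h * ((t : ℤ) - (u % a ⌈/⌉ k : ℕ)) := by
      gcongr; omega
    have : (0 : ℤ) ≤ x₀ := by positivity
    linarith
  obtain ⟨m, hm⟩ := Int.eq_ofNat_of_zero_le hM
  refine ⟨m, u % a, Nat.mod_lt u ha, ?_⟩
  rw [← hm, aperyElt, huZ]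
  ring

lemma exists_linComb_eq_mul_add_aperyElt (hh : 0 < h) (ha : 0 < a) (hk : 0 < k)
    (hpos : 0 < (a : ℤ) + k * d) (x : ℕ → ℕ) :
    ∃ m r : ℕ, r < a ∧ linComb h a k d x = a * m + aperyElt h a k d r := by
  rw [linComb_eq]
  exact exists_mul_add_aperyElt_eq hh ha hk hpos (x 0) (sum_Icc_mul_le k x)

lemma eq_of_mul_add_aperyElt_eq (hcop : IsCoprime (a : ℤ) d) {m₁ r₁ m₂ r₂ : ℕ}
    (hr₁ : r₁ < a) (hr₂ : r₂ < a)
    (heq : a * m₁ + aperyElt h a k d r₁ = a * m₂ + aperyElt h a k d r₂) :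
    m₁ = m₂ ∧ r₁ = r₂ := by
  have hdvd : (a : ℤ) ∣ d * (r₂ - r₁) :=
    ⟨m₁ - m₂ + h * (r₁ ⌈/⌉ k : ℕ) - h * (r₂ ⌈/⌉ k : ℕ), by
      rw [aperyElt, aperyElt] at heq; linear_combination -heq⟩
  have hr : r₁ = r₂ :=
    (Nat.modEq_iff_dvd.mpr (hcop.dvd_of_dvd_mul_left hdvd)).eq_of_lt_of_lt hr₁ hr₂
  subst hr
  refine ⟨?_, rfl⟩
  exact_mod_cast mul_left_cancel₀ (Nat.cast_ne_zero.mpr (Nat.ne_zero_of_lt hr₁))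
    (add_right_cancel heq)

end

/-- Modified arithmetic reduction: for positive h, a, k and integer d with gcd(a,d)=1
and a + kd > 0, ⟨a⟩ + ⟨ha+d⟩ + ⋯ + ⟨ha+kd⟩ = ⟨a⟩ ⊕ {ha⌈r/k⌉ + dr : 0 ≤ r < a},
the sum being direct. -/
theorem stmt_9 (h a k : ℕ) (hh : 0 < h) (ha : 0 < a) (hk : 0 < k) (d : ℤ)
    (hcop : IsCoprime (a : ℤ) d) (hpos : 0 < (a : ℤ) + k * d) :
    ({z : ℤ | ∃ x : ℕ → ℕ,
        z = a * x 0 + ∑ i ∈ Finset.Icc 1 k, ((h * a : ℤ) + i * d) * x i} =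
      {z : ℤ | ∃ m r : ℕ, r < a ∧
        z = a * m + ((h * a : ℤ) * (((r + k - 1) / k : ℕ) : ℤ) + d * r)}) ∧
    ∀ z : ℤ, (∃ x : ℕ → ℕ,
        z = a * x 0 + ∑ i ∈ Finset.Icc 1 k, ((h * a : ℤ) + i * d) * x i) →
      ∃! p : ℕ × ℕ, p.2 < a ∧
        z = a * p.1 + ((h * a : ℤ) * (((p.2 + k - 1) / k : ℕ) : ℤ) + d * p.2) := by
  refine ⟨Set.ext fun z => ⟨?_, ?_⟩, ?_⟩
  · rintro ⟨x, rfl⟩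
    exact exists_linComb_eq_mul_add_aperyElt hh ha hk hpos x
  · rintro ⟨m, r, -, rfl⟩
    obtain ⟨x, hx⟩ := exists_linComb_eq (h := h) (d := d) hk m r
    exact ⟨x, hx.symm⟩
  · rintro z ⟨x, rfl⟩
    obtain ⟨m, r, hr, hx⟩ := exists_linComb_eq_mul_add_aperyElt hh ha hk hpos x
    refine ⟨(m, r), ⟨hr, hx⟩, fun p ⟨hp, hpx⟩ => ?_⟩
    obtain ⟨hm, hr⟩ := eq_of_mul_add_aperyElt_eq hcop hp hr (hpx.symm.trans hx)
    exact Prod.ext hm hr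
end

section
/- Let a₁, ..., aₙ be positive integers with gcd(a₁,...,aₙ) = 1, and let d be a positive integer dividing gcd(a₁,...,a_{n-1}) with gcd(d, aₙ) = 1. Then F(a₁,...,aₙ) = d·F(a₁/d, ..., a_{n-1}/d, aₙ) + aₙ(d-1), where F denotes the Frobenius number of the numerical semigroup generated by the listed integers. -/
/-- Brauer–Shockley recursion for the Frobenius number: if d divides each of a₁,…,a_{n-1}
and gcd(d, c) = 1, then F(a₁,…,a_{n-1},c) = d·F(a₁/d,…,a_{n-1}/d,c) + c(d-1). -/
theorem stmt_10 (n : ℕ) (a : Fin n → ℕ) (c d : ℕ)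
    (hapos : ∀ i, 0 < a i) (hc : 0 < c) (hd : 0 < d)
    (hdvd : ∀ i, d ∣ a i) (hdc : Nat.Coprime d c)
    (hgcd : Nat.gcd (Finset.univ.gcd a) c = 1)
    (F F' : ℕ)
    (hF : IsGreatest {m : ℕ | ¬∃ x : Fin n → ℕ, ∃ y : ℕ,
        m = (∑ i, a i * x i) + c * y} F)
    (hF' : IsGreatest {m : ℕ | ¬∃ x : Fin n → ℕ, ∃ y : ℕ,
        m = (∑ i, (a i / d) * x i) + c * y} F') :
    F = d * F' + c * (d - 1) := by
  haveI : NeZero d := ⟨hd.ne'⟩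
  obtain ⟨hFmem, hFub⟩ := hF
  obtain ⟨hF'mem, hF'ub⟩ := hF'
  have hsum : ∀ x : Fin n → ℕ, (∑ i, a i * x i) = d * ∑ i, (a i / d) * x i := by
    intro x
    rw [Finset.mul_sum]
    refine Finset.sum_congr rfl fun i _ => ?_
    obtain ⟨k, hk⟩ := hdvd i
    rw [hk, Nat.mul_div_cancel_left _ hd]; ring
  -- d*F' + c*(d-1) is not representable
  have hkey : d * F' + c * (d - 1) ∈ {m : ℕ | ¬∃ x : Fin n → ℕ, ∃ y : ℕ,
      m = (∑ i, a i * x i) + c * y} := by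
    rintro ⟨x, y, hxy⟩
    rw [hsum x] at hxy
    set A := ∑ i, (a i / d) * x i with hA
    -- reduce mod d
    have hcast := congrArg (Nat.cast : ℕ → ZMod d) hxy
    push_cast [ZMod.natCast_self] at hcast
    have hcu : IsUnit (c : ZMod d) :=
      (ZMod.isUnit_iff_coprime c d).mpr hdc.symm
    have hy' : ((d - 1 : ℕ) : ZMod d) = (y : ZMod d) := by
      apply hcu.mul_left_cancel
      simpa using hcast
    have hymod : (d - 1) % d = y % d := (ZMod.natCast_eq_natCast_iff _ _ _).mp hy'
    have hym : y % d = d - 1 := by rw [← hymod, Nat.mod_eq_of_lt (by omega)]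
    have hy : y = d * (y / d) + (d - 1) := by
      rw [← hym]; exact (Nat.div_add_mod y d).symm
    set t := y / d with ht
    have h2 : d * F' + c * (d - 1) = d * (A + c * t) + c * (d - 1) := by
      rw [hxy, hy]; ring
    have h3 : F' = A + c * t := Nat.eq_of_mul_eq_mul_left hd (Nat.add_right_cancel h2)
    exact hF'mem ⟨x, t, h3⟩
  have hle1 : d * F' + c * (d - 1) ≤ F := hFub hkey
  -- now show F ≤ d*F' + c*(d-1)
  by_contra hne
  have hlt : d * F' + c * (d - 1) < F := lt_of_le_of_ne hle1 (fun h => hne h.symm)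
  -- choose y < d with c*y ≡ F (mod d)
  set yz : ZMod d := (c : ZMod d)⁻¹ * (F : ZMod d) with hyz
  set y : ℕ := yz.val with hyv
  have hylt : y < d := ZMod.val_lt yz
  have h1 : (c : ZMod d) * (c : ZMod d)⁻¹ = 1 := ZMod.coe_mul_inv_eq_one c hdc.symm
  have hcyF : ((c * y : ℕ) : ZMod d) = (F : ZMod d) := by
    push_cast
    rw [hyv, ZMod.natCast_val, ZMod.cast_id, hyz, ← mul_assoc, h1, one_mul]
  have hmodeq : c * y ≡ F [MOD d] := (ZMod.natCast_eq_natCast_iff _ _ _).mp hcyF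
  have hcy : c * y ≤ c * (d - 1) := Nat.mul_le_mul_left c (by omega)
  have hcyle : c * y ≤ F := le_trans hcy (le_trans (Nat.le_add_left _ _) hle1)
  obtain ⟨M, hM⟩ := (Nat.modEq_iff_dvd' hcyle).mp hmodeq
  have hFM : F = d * M + c * y := by omega
  have hdM : d * F' < d * M := by
    have : d * F' + c * y < F := lt_of_le_of_lt (Nat.add_le_add_left hcy _) hlt
    omega
  have hF'M : F' < M := lt_of_mul_lt_mul_left hdM (Nat.zero_le d)
  -- M is representable
  have hMrep : ∃ x : Fin n → ℕ, ∃ t : ℕ, M = (∑ i, (a i / d) * x i) + c * t := by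
    by_contra h
    exact absurd (hF'ub h) (not_le.mpr hF'M)
  obtain ⟨x, t, hxt⟩ := hMrep
  apply hFmem
  refine ⟨x, d * t + y, ?_⟩
  rw [hsum x, hFM, hxt]; ring
end

section
/- Let a₁, ..., aₙ be positive integers with gcd(a₁,...,aₙ) = 1, and let d divide gcd(a₁,...,a_{n-1}) with gcd(d, aₙ) = 1. Then the genus satisfies g(a₁,...,aₙ) = d·g(a₁/d, ..., a_{n-1}/d, aₙ) + (aₙ - 1)(d - 1)/2. -/
/-!
As gcd(d, c) = 1, every natural number is congruent mod d to c·r for a unique r < d, and in a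
representation m = d·∑ bᵢxᵢ + c·y of such an m the coefficient y must be ≡ r (mod d).
So m is representable iff m = d·k + c·r with k representable by b and c: the gaps in the class
of c·r are the ⌊cr/d⌋ numbers of that class below c·r together with a copy of the gaps of
⟨b, c⟩. Finally ∑_{r<d} ⌊cr/d⌋ = (c - 1)(d - 1)/2, because the residues cr mod d run through
0, …, d - 1.
-/

open Finset

section Gaps

variable {ι : Type*} [Fintype ι]

def Representable (a : ι → ℕ) (c m : ℕ) : Prop :=
  ∃ x : ι → ℕ, ∃ y : ℕ, m = ∑ i, a i * x i + c * y

def gaps (a : ι → ℕ) (c : ℕ) : Set ℕ := {m | ¬ Representable a c m}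

variable {a : ι → ℕ} {c : ℕ}

lemma Representable.add {m₁ m₂ : ℕ} (h₁ : Representable a c m₁) (h₂ : Representable a c m₂) :
    Representable a c (m₁ + m₂) := by
  obtain ⟨x₁, y₁, rfl⟩ := h₁
  obtain ⟨x₂, y₂, rfl⟩ := h₂
  refine ⟨x₁ + x₂, y₁ + y₂, ?_⟩
  simp only [Pi.add_apply, mul_add, sum_add_distrib]
  ring

lemma representable_of_mem_closure {m : ℕ}
    (hm : m ∈ AddSubmonoid.closure (insert c (Set.range a))) : Representable a c m := by
  classical
  induction hm using AddSubmonoid.closure_induction with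
  | mem m hm =>
    rcases hm with rfl | ⟨i, rfl⟩
    · exact ⟨0, 1, by simp⟩
    · exact ⟨Pi.single i 1, 0, by simp [Pi.single_apply]⟩
  | zero => exact ⟨0, 0, by simp⟩
  | add _ _ _ _ h₁ h₂ => exact h₁.add h₂

lemma finite_gaps (h : Nat.gcd (univ.gcd a) c = 1) : (gaps a c).Finite := by
  set s := insert c (Set.range a)
  obtain ⟨N, hN⟩ := Nat.exists_mem_closure_of_ge s
  have hs : Nat.setGcd s = 1 := by
    refine Nat.dvd_one.mp (h ▸ Nat.dvd_gcd (Finset.dvd_gcd fun i _ => ?_) ?_)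
    · exact Nat.setGcd_dvd_of_mem (Set.mem_insert_of_mem _ ⟨i, rfl⟩)
    · exact Nat.setGcd_dvd_of_mem (Set.mem_insert _ _)
  refine (Set.finite_Iio N).subset fun m hm => ?_
  by_contra hmN
  exact hm (representable_of_mem_closure (hN m (not_lt.mp hmN) (hs ▸ one_dvd m)))

end Gaps

section Residues

variable {c d : ℕ}

lemma injOn_mul_mod (hdc : d.Coprime c) : Set.InjOn (fun r => c * r % d) (range d) := by
  intro r hr r' hr' h
  have := Nat.ModEq.cancel_left_of_coprime hdc h
  rwa [Nat.ModEq, Nat.mod_eq_of_lt (mem_range.mp hr), Nat.mod_eq_of_lt (mem_range.mp hr')] at this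

lemma image_mul_mod_range (hdc : d.Coprime c) : (range d).image (fun r => c * r % d) = range d := by
  refine eq_of_subset_of_card_le (fun s hs => ?_) (card_image_of_injOn (injOn_mul_mod hdc)).ge
  obtain ⟨r, hr, rfl⟩ := mem_image.mp hs
  exact mem_range.mpr (Nat.mod_lt _ (pos_of_ne_zero (by rintro rfl; simp at hr)))

lemma sum_range_mul_div (hdc : d.Coprime c) : ∑ r ∈ range d, c * r / d = (c - 1) * (d - 1) / 2 := by
  have hmod : ∑ r ∈ range d, c * r % d = ∑ r ∈ range d, r := by
    conv_rhs => rw [← image_mul_mod_range hdc, sum_image (injOn_mul_mod hdc)]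
  have hdiv : d * ∑ r ∈ range d, c * r / d + ∑ r ∈ range d, c * r % d = c * ∑ r ∈ range d, r := by
    rw [mul_sum, ← sum_add_distrib, mul_sum]
    exact sum_congr rfl fun r _ => Nat.div_add_mod (c * r) d
  rw [hmod] at hdiv
  have hgauss := sum_range_id_mul_two d
  rcases Nat.eq_zero_or_pos d with rfl | hd
  · simp
  have key : 2 * ∑ r ∈ range d, c * r / d + (d - 1) = c * (d - 1) := by
    refine Nat.eq_of_mul_eq_mul_left hd ?_
    nlinarith
  rw [Nat.sub_one_mul]
  omega

end Residues

section Scaling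

variable {ι : Type*} [Fintype ι] {b : ι → ℕ} {c d : ℕ}

lemma sum_mul_left_mul (x : ι → ℕ) : ∑ i, d * b i * x i = d * ∑ i, b i * x i := by
  simp only [mul_sum, mul_assoc]

lemma Representable.mul_add {k : ℕ} (h : Representable b c k) (r : ℕ) :
    Representable (fun i => d * b i) c (d * k + c * r) := by
  obtain ⟨x, y, rfl⟩ := h
  refine ⟨x, d * y + r, ?_⟩
  rw [sum_mul_left_mul]
  ring

lemma representable_mul_iff (hdc : d.Coprime c) {r m : ℕ} (hr : r < d) (hm : m ≡ c * r [MOD d]) :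
    Representable (fun i => d * b i) c m ↔ ∃ k, Representable b c k ∧ m = d * k + c * r := by
  refine ⟨?_, fun ⟨k, hk, hmk⟩ => hmk ▸ hk.mul_add r⟩
  rintro ⟨x, y, rfl⟩
  rw [sum_mul_left_mul] at hm ⊢
  have hy : y = d * (y / d) + r := by
    have : y % d = r % d := Nat.ModEq.cancel_left_of_coprime hdc (by simpa using hm)
    rw [Nat.mod_eq_of_lt hr] at this
    rw [← this, Nat.div_add_mod]
  refine ⟨∑ i, b i * x i + c * (y / d), ⟨x, y / d, rfl⟩, ?_⟩
  conv_lhs => rw [hy]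
  ring

lemma finite_gaps_of_mul (hdc : d.Coprime c) (hd : 0 < d)
    (hfin : (gaps (fun i => d * b i) c).Finite) : (gaps b c).Finite := by
  refine (hfin.preimage (mul_right_injective₀ hd.ne').injOn).subset fun k hk hdk => hk ?_
  obtain ⟨k', hk', hkk'⟩ :=
    (representable_mul_iff hdc hd (m := d * k) (by simp [Nat.modEq_zero_iff_dvd])).mp hdk
  obtain rfl : k = k' := by simpa [hd.ne'] using hkk'
  exact hk'

lemma filter_modEq_gaps_mul (hdc : d.Coprime c) (hfin : (gaps (fun i => d * b i) c).Finite)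
    {r : ℕ} (hr : r < d) :
    {m ∈ hfin.toFinset | m ≡ c * r [MOD d]} =
      {m ∈ range (c * r) | m ≡ c * r [MOD d]} ∪
        (finite_gaps_of_mul hdc (r.zero_le.trans_lt hr) hfin).toFinset.image
          (fun k => d * k + c * r) := by
  ext m
  simp only [mem_union, mem_filter, mem_range, mem_image, Set.Finite.mem_toFinset, gaps,
    Set.mem_ofPred_eq]
  constructor
  · rintro ⟨hgap, hm⟩
    by_cases hlt : m < c * r
    · exact .inl ⟨hlt, hm⟩
    obtain ⟨k, hk⟩ := (Nat.modEq_iff_dvd' (not_lt.mp hlt)).mp hm.symm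
    have hmk : m = d * k + c * r := by omega
    exact .inr ⟨k, fun hrep => hgap (hmk ▸ hrep.mul_add r), hmk.symm⟩
  · rintro (⟨hlt, hm⟩ | ⟨k, hk, rfl⟩)
    · refine ⟨fun hrep => ?_, hm⟩
      obtain ⟨k, -, rfl⟩ := (representable_mul_iff hdc hr hm).mp hrep
      omega
    · have hm : d * k + c * r ≡ c * r [MOD d] := by simp [Nat.ModEq]
      refine ⟨fun hrep => ?_, hm⟩
      obtain ⟨k', hk', hkk'⟩ := (representable_mul_iff hdc hr hm).mp hrep
      obtain rfl : k = k' := by simpa [(r.zero_le.trans_lt hr).ne'] using hkk'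
      exact hk hk'

lemma card_filter_modEq_gaps_mul (hdc : d.Coprime c) (hfin : (gaps (fun i => d * b i) c).Finite)
    {r : ℕ} (hr : r < d) :
    #{m ∈ hfin.toFinset | m ≡ c * r [MOD d]} = c * r / d + (gaps b c).ncard := by
  have hd : 0 < d := r.zero_le.trans_lt hr
  rw [filter_modEq_gaps_mul hdc hfin hr, card_union_of_disjoint, ← Nat.count_eq_card_filter_range,
    Nat.count_modEq_card _ hd, if_neg (lt_irrefl _), add_zero,
    card_image_of_injective _ fun k k' h => by simpa [hd.ne'] using h,
    Set.ncard_eq_toFinset_card _ (finite_gaps_of_mul hdc hd hfin)]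
  refine disjoint_left.mpr fun m hlow himg => ?_
  obtain ⟨k, -, rfl⟩ := mem_image.mp himg
  simpa using (mem_filter.mp hlow).1

theorem ncard_gaps_mul (hdc : d.Coprime c) (hd : 0 < d)
    (hfin : (gaps (fun i => d * b i) c).Finite) :
    (gaps (fun i => d * b i) c).ncard = d * (gaps b c).ncard + (c - 1) * (d - 1) / 2 := by
  have hres : (hfin.toFinset : Set ℕ).MapsTo (· % d) (range d) := fun m _ =>
    mem_range.mpr (Nat.mod_lt m hd)
  rw [Set.ncard_eq_toFinset_card _ hfin, card_eq_sum_card_fiberwise hres,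
    ← image_mul_mod_range hdc, sum_image (injOn_mul_mod hdc)]
  refine (sum_congr rfl fun r hr => card_filter_modEq_gaps_mul hdc hfin (mem_range.mp hr)).trans ?_
  rw [sum_add_distrib, sum_range_mul_div hdc, sum_const, card_range, smul_eq_mul]
  ring

end Scaling

theorem stmt_11_general (n : ℕ) (a : Fin n → ℕ) (c d : ℕ)
    (hd : 0 < d) (hdvd : ∀ i, d ∣ a i) (hdc : Nat.Coprime d c)
    (hgcd : Nat.gcd (Finset.univ.gcd a) c = 1) :
    {m : ℕ | ¬∃ x : Fin n → ℕ, ∃ y : ℕ, m = (∑ i, a i * x i) + c * y}.ncard =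
      d * {m : ℕ | ¬∃ x : Fin n → ℕ, ∃ y : ℕ,
        m = (∑ i, (a i / d) * x i) + c * y}.ncard + (c - 1) * (d - 1) / 2 := by
  obtain ⟨b, rfl⟩ : ∃ b, a = fun i => d * b i :=
    ⟨fun i => a i / d, funext fun i => (Nat.mul_div_cancel' (hdvd i)).symm⟩
  simp only [Nat.mul_div_cancel_left _ hd]
  exact ncard_gaps_mul hdc hd (finite_gaps hgcd)

/-- Brauer–Shockley-type recursion for the genus: if d divides each of a₁,…,a_{n-1}
and gcd(d, c) = 1, then g(a₁,…,a_{n-1},c) = d·g(a₁/d,…,a_{n-1}/d,c) + (c-1)(d-1)/2. -/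
theorem stmt_11 (n : ℕ) (a : Fin n → ℕ) (c d : ℕ)
    (hapos : ∀ i, 0 < a i) (hc : 0 < c) (hd : 0 < d)
    (hdvd : ∀ i, d ∣ a i) (hdc : Nat.Coprime d c)
    (hgcd : Nat.gcd (Finset.univ.gcd a) c = 1) :
    {m : ℕ | ¬∃ x : Fin n → ℕ, ∃ y : ℕ, m = (∑ i, a i * x i) + c * y}.ncard =
      d * {m : ℕ | ¬∃ x : Fin n → ℕ, ∃ y : ℕ,
        m = (∑ i, (a i / d) * x i) + c * y}.ncard + (c - 1) * (d - 1) / 2 :=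
  stmt_11_general n a c d hd hdvd hdc hgcd
end

section
/- Let a and b be coprime positive integers and n ≥ 1, and let S be the numerical semigroup generated by the geometric progression aⁿ, a^{n-1}b, a^{n-2}b², ..., bⁿ. Then Ap(S, aⁿ) = {a^{n-1}b·r₁ + a^{n-2}b²·r₂ + ... + bⁿ·rₙ : 0 ≤ rᵢ < a}, with each element having a unique such representation, and the Frobenius number of S is F(S) = -aⁿ + Σ_{k=1}^{n} (a-1)·a^{n-k}b^{k}. -/
/-- The numerical semigroup generated by the geometric progression aⁿ, aⁿ⁻¹b, …, bⁿ. -/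
def geomSG (a b n : ℕ) : Set ℕ :=
  {m : ℕ | ∃ x : ℕ → ℕ, m = ∑ k ∈ Finset.range (n + 1), a ^ (n - k) * b ^ k * x k}

section helpers
open Finset

lemma gsum_split (n : ℕ) (f : ℕ → ℕ) :
    ∑ k ∈ range (n + 1), f k = f 0 + ∑ k ∈ Icc 1 n, f k := by
  have h : range (n+1) = insert 0 (Icc 1 n) := by
    ext k; simp [Nat.lt_succ_iff]; omega
  rw [h, Finset.sum_insert (by simp)]

lemma greduce (a b n : ℕ) (ha : 0 < a) (x : ℕ → ℕ) :
    ∃ y : ℕ → ℕ, (∀ k ∈ Icc 1 n, y k < a) ∧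
      ∑ k ∈ range (n + 1), a ^ (n - k) * b ^ k * y k
        = ∑ k ∈ range (n + 1), a ^ (n - k) * b ^ k * x k := by
  suffices h : ∀ d : ℕ, ∃ y : ℕ → ℕ, (∀ k, n - d < k → k ≤ n → y k < a) ∧
      ∑ k ∈ range (n + 1), a ^ (n - k) * b ^ k * y k
        = ∑ k ∈ range (n + 1), a ^ (n - k) * b ^ k * x k by
    obtain ⟨y, h1, h2⟩ := h n
    exact ⟨y, fun k hk => by rw [mem_Icc] at hk; exact h1 k (by omega) hk.2, h2⟩
  intro d
  induction d with
  | zero => exact ⟨x, fun k h1 h2 => absurd h1 (by omega), rfl⟩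
  | succ d ih =>
    obtain ⟨y, hy, hsum⟩ := ih
    by_cases hd : n ≤ d
    · exact ⟨y, fun k h1 h2 => hy k (by omega) h2, hsum⟩
    · push_neg at hd
      set j := n - d with hj
      have hj1 : 1 ≤ j := by omega
      have hjn : j ≤ n := by omega
      have hne : j - 1 ≠ j := by omega
      set z : ℕ → ℕ := fun k => if k = j then y j % a else
          if k = j - 1 then y (j-1) + b * (y j / a) else y k with hzdef
      have hzj : z j = y j % a := by simp [hzdef]
      have hzj1 : z (j-1) = y (j-1) + b * (y j / a) := by simp [hzdef, hne]
      have hzo : ∀ k, k ≠ j → k ≠ j - 1 → z k = y k := by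
        intro k h1 h2; simp [hzdef, h1, h2]
      refine ⟨z, ?_, ?_⟩
      · intro k h1 h2
        rcases eq_or_ne k j with rfl | hkj
        · rw [hzj]; exact Nat.mod_lt _ ha
        · rw [hzo k hkj (by omega)]
          exact hy k (by omega) h2
      · rw [← hsum]
        have hjmem : j ∈ range (n+1) := by rw [mem_range]; omega
        have hj1mem : j - 1 ∈ (range (n+1)).erase j := by
          rw [mem_erase, mem_range]; exact ⟨hne, by omega⟩
        have hkey : ∀ w : ℕ → ℕ, ∑ k ∈ range (n+1), a ^ (n-k) * b ^ k * w k =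
            a ^ (n-j) * b ^ j * w j + (a ^ (n-(j-1)) * b ^ (j-1) * w (j-1) +
              ∑ k ∈ ((range (n+1)).erase j).erase (j-1), a ^ (n-k) * b ^ k * w k) := by
          intro w
          rw [← Finset.add_sum_erase _ (fun k => a ^ (n-k) * b ^ k * w k) hjmem,
            ← Finset.add_sum_erase _ (fun k => a ^ (n-k) * b ^ k * w k) hj1mem]
        rw [hkey z, hkey y]
        have hoff : ∑ k ∈ ((range (n+1)).erase j).erase (j-1), a ^ (n-k) * b ^ k * z k =
            ∑ k ∈ ((range (n+1)).erase j).erase (j-1), a ^ (n-k) * b ^ k * y k := by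
          refine sum_congr rfl fun k hk => ?_
          rw [mem_erase, mem_erase] at hk
          rw [hzo k hk.2.1 hk.1]
        rw [hoff, hzj, hzj1]
        have hg : a ^ (n-(j-1)) * b ^ (j-1) * b = a * (a ^ (n-j) * b ^ j) := by
          have hb' : b ^ (j-1) * b = b ^ j := by
            rw [← pow_succ]; congr 1; omega
          calc a ^ (n-(j-1)) * b ^ (j-1) * b
              = a ^ ((n-j)+1) * (b ^ (j-1) * b) := by
                rw [show n-(j-1) = (n-j)+1 from by omega]; ring
            _ = a ^ ((n-j)+1) * b ^ j := by rw [hb']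
            _ = a * (a ^ (n-j) * b ^ j) := by rw [pow_succ]; ring
        have harith : a ^ (n-j) * b ^ j * (y j % a) +
            a ^ (n-(j-1)) * b ^ (j-1) * (y (j-1) + b * (y j / a)) =
            a ^ (n-j) * b ^ j * y j + a ^ (n-(j-1)) * b ^ (j-1) * y (j-1) := by
          have h3 : y j % a + a * (y j / a) = y j := Nat.mod_add_div _ _
          calc a ^ (n-j) * b ^ j * (y j % a) +
              a ^ (n-(j-1)) * b ^ (j-1) * (y (j-1) + b * (y j / a))
              = a ^ (n-j) * b ^ j * (y j % a) + a ^ (n-(j-1)) * b ^ (j-1) * y (j-1)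
                + (a ^ (n-(j-1)) * b ^ (j-1) * b) * (y j / a) := by ring
            _ = a ^ (n-j) * b ^ j * (y j % a) + a ^ (n-(j-1)) * b ^ (j-1) * y (j-1)
                + (a * (a ^ (n-j) * b ^ j)) * (y j / a) := by rw [hg]
            _ = a ^ (n-j) * b ^ j * (y j % a + a * (y j / a))
                + a ^ (n-(j-1)) * b ^ (j-1) * y (j-1) := by ring
            _ = a ^ (n-j) * b ^ j * y j + a ^ (n-(j-1)) * b ^ (j-1) * y (j-1) := by rw [h3]
        omega


lemma guniq (a b : ℕ) (ha : 0 < a) (hab : Nat.Coprime a b) :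
    ∀ n : ℕ, ∀ x y : ℕ → ℕ, (∀ k, 1 ≤ k → k ≤ n → x k < a) → (∀ k, 1 ≤ k → k ≤ n → y k < a) →
      ∑ k ∈ range (n + 1), a ^ (n - k) * b ^ k * x k
        = ∑ k ∈ range (n + 1), a ^ (n - k) * b ^ k * y k →
      ∀ k, k ≤ n → x k = y k := by
  intro n
  induction n with
  | zero =>
    intro x y _ _ h k hk
    interval_cases k
    simpa using h
  | succ n ih =>
    intro x y hx hy h
    have hmod : ∀ z : ℕ → ℕ,
        ∑ k ∈ range (n+2), a ^ (n+1-k) * b ^ k * z k ≡ b ^ (n+1) * z (n+1) [MOD a] := by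
      intro z
      rw [Finset.sum_range_succ]
      have h0 : ∑ k ∈ range (n+1), a ^ (n+1-k) * b ^ k * z k ≡ 0 [MOD a] := by
        refine (Nat.modEq_zero_iff_dvd).mpr (Finset.dvd_sum fun k hk => ?_)
        rw [mem_range] at hk
        exact Dvd.dvd.mul_right (Dvd.dvd.mul_right (dvd_pow_self a (by omega)) _) _
      have hlast : a ^ (n+1-(n+1)) * b ^ (n+1) * z (n+1) = b ^ (n+1) * z (n+1) := by simp
      calc ∑ k ∈ range (n+1), a ^ (n+1-k) * b ^ k * z k + a ^ (n+1-(n+1)) * b ^ (n+1) * z (n+1)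
          ≡ 0 + a ^ (n+1-(n+1)) * b ^ (n+1) * z (n+1) [MOD a] := h0.add_right _
        _ = b ^ (n+1) * z (n+1) := by rw [hlast, zero_add]
    have h1 : b ^ (n+1) * x (n+1) ≡ b ^ (n+1) * y (n+1) [MOD a] :=
      (hmod x).symm.trans (by rw [h]; exact hmod y)
    have h2 : x (n+1) ≡ y (n+1) [MOD a] :=
      Nat.ModEq.cancel_left_of_coprime (Nat.Coprime.pow_right (n+1) hab) h1
    have hlast : x (n+1) = y (n+1) := by
      have h3 := h2
      unfold Nat.ModEq at h3
      rwa [Nat.mod_eq_of_lt (hx _ (by omega) (le_refl _)),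
        Nat.mod_eq_of_lt (hy _ (by omega) (le_refl _))] at h3
    have h3 : ∑ k ∈ range (n+1), a ^ (n+1-k) * b ^ k * x k
        = ∑ k ∈ range (n+1), a ^ (n+1-k) * b ^ k * y k := by
      rw [Finset.sum_range_succ (fun k => a ^ (n+1-k) * b ^ k * x k),
        Finset.sum_range_succ (fun k => a ^ (n+1-k) * b ^ k * y k), hlast] at h
      exact Nat.add_right_cancel h
    have h4 : ∀ z : ℕ → ℕ, ∑ k ∈ range (n+1), a ^ (n+1-k) * b ^ k * z k
        = a * ∑ k ∈ range (n+1), a ^ (n-k) * b ^ k * z k := by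
      intro z
      rw [Finset.mul_sum]
      refine sum_congr rfl fun k hk => ?_
      rw [mem_range] at hk
      rw [show n+1-k = (n-k)+1 from by omega, pow_succ]
      ring
    have h5 : ∑ k ∈ range (n+1), a ^ (n-k) * b ^ k * x k
        = ∑ k ∈ range (n+1), a ^ (n-k) * b ^ k * y k := by
      apply Nat.eq_of_mul_eq_mul_left ha
      rw [← h4, ← h4]; exact h3
    have h6 := ih x y (fun k hk1 hk2 => hx k hk1 (by omega))
      (fun k hk1 hk2 => hy k hk1 (by omega)) h5
    intro k hk
    rcases Nat.lt_or_ge k (n+1) with hk' | hk'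
    · exact h6 k (by omega)
    · have : k = n + 1 := by omega
      rw [this]; exact hlast

lemma gIccSum (n : ℕ) (t : ℕ) (r : ℕ → ℕ) (a b : ℕ) :
    ∑ k ∈ range (n + 1), a ^ (n - k) * b ^ k * (fun k => if k = 0 then t else r k) k
      = a ^ n * t + ∑ k ∈ Icc 1 n, a ^ (n - k) * b ^ k * r k := by
  rw [gsum_split]
  congr 1
  · simp
  · refine sum_congr rfl fun k hk => ?_
    rw [mem_Icc] at hk
    simp only [if_neg (show k ≠ 0 by omega)]

lemma guniq_mod_aux (a b n : ℕ) (ha : 0 < a) (hab : Nat.Coprime a b) (r r' : ℕ → ℕ)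
    (hr : ∀ k ∈ Icc 1 n, r k < a) (hr' : ∀ k ∈ Icc 1 n, r' k < a)
    (hle : ∑ k ∈ Icc 1 n, a ^ (n - k) * b ^ k * r k
      ≤ ∑ k ∈ Icc 1 n, a ^ (n - k) * b ^ k * r' k)
    (h : ∑ k ∈ Icc 1 n, a ^ (n - k) * b ^ k * r k
      ≡ ∑ k ∈ Icc 1 n, a ^ (n - k) * b ^ k * r' k [MOD a ^ n]) :
    ∀ k ∈ Icc 1 n, r k = r' k := by
  obtain ⟨t, ht⟩ : ∃ t, ∑ k ∈ Icc 1 n, a ^ (n - k) * b ^ k * r' k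
      = ∑ k ∈ Icc 1 n, a ^ (n - k) * b ^ k * r k + a ^ n * t := by
    obtain ⟨t, ht⟩ := (Nat.modEq_iff_dvd' hle).mp h
    exact ⟨t, by omega⟩
  have key := guniq a b ha hab n (fun k => if k = 0 then t else r k)
    (fun k => if k = 0 then 0 else r' k)
    (fun k h1 h2 => by
      simp only [if_neg (show k ≠ 0 by omega)]; exact hr k (by rw [mem_Icc]; omega))
    (fun k h1 h2 => by
      simp only [if_neg (show k ≠ 0 by omega)]; exact hr' k (by rw [mem_Icc]; omega))
    (by rw [gIccSum, gIccSum]; omega)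
  intro k hk
  have hk' := hk
  rw [mem_Icc] at hk'
  have := key k hk'.2
  simpa only [if_neg (show k ≠ 0 by omega)] using this

lemma guniq_mod (a b n : ℕ) (ha : 0 < a) (hab : Nat.Coprime a b) (r r' : ℕ → ℕ)
    (hr : ∀ k ∈ Icc 1 n, r k < a) (hr' : ∀ k ∈ Icc 1 n, r' k < a)
    (h : ∑ k ∈ Icc 1 n, a ^ (n - k) * b ^ k * r k
      ≡ ∑ k ∈ Icc 1 n, a ^ (n - k) * b ^ k * r' k [MOD a ^ n]) :
    ∀ k ∈ Icc 1 n, r k = r' k := by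
  rcases le_total (∑ k ∈ Icc 1 n, a ^ (n - k) * b ^ k * r k)
      (∑ k ∈ Icc 1 n, a ^ (n - k) * b ^ k * r' k) with hle | hle
  · exact guniq_mod_aux a b n ha hab r r' hr hr' hle h
  · intro k hk
    exact (guniq_mod_aux a b n ha hab r' r hr' hr hle h.symm k hk).symm

def gext (a n : ℕ) (r : Fin n → Fin a) (k : ℕ) : ℕ :=
  if h : 1 ≤ k ∧ k ≤ n then (r ⟨k - 1, by omega⟩ : ℕ) else 0

lemma gext_val (a n : ℕ) (r : Fin n → Fin a) (i : Fin n) :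
    gext a n r ((i : ℕ) + 1) = (r i : ℕ) := by
  unfold gext
  rw [dif_pos (show 1 ≤ (i:ℕ)+1 ∧ (i:ℕ)+1 ≤ n from ⟨by omega, Nat.succ_le_of_lt i.isLt⟩)]
  congr 1

lemma gsurj_mod (a b n : ℕ) (ha : 0 < a) (hab : Nat.Coprime a b) (m : ℕ) :
    ∃ r : ℕ → ℕ, (∀ k ∈ Icc 1 n, r k < a) ∧
      (∑ k ∈ Icc 1 n, a ^ (n - k) * b ^ k * r k) ≡ m [MOD a ^ n] := by
  haveI : NeZero (a ^ n) := ⟨pow_ne_zero _ (by omega)⟩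
  have hbd : ∀ r : Fin n → Fin a, ∀ k ∈ Icc 1 n, gext a n r k < a := by
    intro r k hk
    rw [mem_Icc] at hk
    unfold gext
    rw [dif_pos hk]
    exact (r ⟨k - 1, by omega⟩).isLt
  set φ : (Fin n → Fin a) → ZMod (a ^ n) := fun r =>
    ((∑ k ∈ Icc 1 n, a ^ (n - k) * b ^ k * gext a n r k : ℕ) : ZMod (a ^ n)) with hφ
  have hφinj : Function.Injective φ := by
    intro r r' hrr
    have hmod : (∑ k ∈ Icc 1 n, a ^ (n - k) * b ^ k * gext a n r k)
        ≡ (∑ k ∈ Icc 1 n, a ^ (n - k) * b ^ k * gext a n r' k) [MOD a ^ n] :=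
      (ZMod.natCast_eq_natCast_iff _ _ _).mp hrr
    have key := guniq_mod a b n ha hab _ _ (hbd r) (hbd r') hmod
    funext i
    have hmem : (i : ℕ) + 1 ∈ Icc 1 n := by
      rw [mem_Icc]
      exact ⟨by omega, Nat.succ_le_of_lt i.isLt⟩
    have h2 := key ((i : ℕ) + 1) hmem
    rw [gext_val, gext_val] at h2
    exact Fin.val_injective h2
  have hφsurj : Function.Surjective φ := by
    have hbij : Function.Bijective φ :=
      (Fintype.bijective_iff_injective_and_card φ).mpr
        ⟨hφinj, by simp [ZMod.card]⟩
    exact hbij.2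
  obtain ⟨r, hr⟩ := hφsurj ((m : ZMod (a ^ n)))
  exact ⟨gext a n r, hbd r, (ZMod.natCast_eq_natCast_iff _ _ _).mp hr⟩

lemma gpow_le (a b : ℕ) (ha : 2 ≤ a) (hb : 2 ≤ b) :
    ∀ n, 1 ≤ n → a ^ n ≤ ∑ k ∈ Icc 1 n, (a - 1) * (a ^ (n - k) * b ^ k) := by
  intro n hn
  induction n, hn using Nat.le_induction with
  | base =>
    simp only [Icc_self, sum_singleton]
    simp only [Nat.sub_self, pow_zero, one_mul, pow_one]
    calc a ≤ (a - 1) * 2 := by omega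
      _ ≤ (a - 1) * b := Nat.mul_le_mul_left _ hb
  | succ n hn ih =>
    rw [Finset.sum_Icc_succ_top (by omega)]
    have hstep : ∑ k ∈ Icc 1 n, (a - 1) * (a ^ (n + 1 - k) * b ^ k)
        = a * ∑ k ∈ Icc 1 n, (a - 1) * (a ^ (n - k) * b ^ k) := by
      rw [Finset.mul_sum]
      refine sum_congr rfl fun k hk => ?_
      rw [mem_Icc] at hk
      rw [show n + 1 - k = (n - k) + 1 from by omega, pow_succ]
      ring
    rw [hstep]
    calc a ^ (n + 1) = a * a ^ n := by rw [pow_succ]; ring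
      _ ≤ a * ∑ k ∈ Icc 1 n, (a - 1) * (a ^ (n - k) * b ^ k) := Nat.mul_le_mul_left a ih
      _ ≤ _ := Nat.le_add_right _ _

end helpers

open Finset

/-- For coprime a, b and S = ⟨aⁿ, aⁿ⁻¹b, …, bⁿ⟩: the Apéry set of S with respect to aⁿ
is {Σ_{k=1}^n aⁿ⁻ᵏbᵏ rₖ : 0 ≤ rₖ < a}, each element having a unique such representation,
and F(S) = -aⁿ + Σ_{k=1}^n (a-1)aⁿ⁻ᵏbᵏ. -/
theorem stmt_12 (a b n : ℕ) (ha : 0 < a) (hb : 0 < b) (hn : 1 ≤ n)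
    (hab : Nat.Coprime a b) :
    ({s : ℕ | s ∈ geomSG a b n ∧ ¬∃ t ∈ geomSG a b n, s = t + a ^ n} =
      {m : ℕ | ∃ r : ℕ → ℕ, (∀ k ∈ Finset.Icc 1 n, r k < a) ∧
        m = ∑ k ∈ Finset.Icc 1 n, a ^ (n - k) * b ^ k * r k}) ∧
    (∀ r r' : ℕ → ℕ, (∀ k ∈ Finset.Icc 1 n, r k < a) → (∀ k ∈ Finset.Icc 1 n, r' k < a) →
      (∑ k ∈ Finset.Icc 1 n, a ^ (n - k) * b ^ k * r k) =
        (∑ k ∈ Finset.Icc 1 n, a ^ (n - k) * b ^ k * r' k) →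
      ∀ k ∈ Finset.Icc 1 n, r k = r' k) ∧
    (∀ F : ℕ, IsGreatest {m : ℕ | m ∉ geomSG a b n} F →
      F + a ^ n = ∑ k ∈ Finset.Icc 1 n, (a - 1) * (a ^ (n - k) * b ^ k)) := by
  have part1 : {s : ℕ | s ∈ geomSG a b n ∧ ¬∃ t ∈ geomSG a b n, s = t + a ^ n} =
      {m : ℕ | ∃ r : ℕ → ℕ, (∀ k ∈ Finset.Icc 1 n, r k < a) ∧
        m = ∑ k ∈ Finset.Icc 1 n, a ^ (n - k) * b ^ k * r k} := by
    ext s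
    simp only [Set.mem_setOf_eq]
    constructor
    · rintro ⟨⟨x, rfl⟩, hno⟩
      obtain ⟨y, hy, hsum⟩ := greduce a b n ha x
      have hy0 : y 0 = 0 := by
        by_contra h0
        apply hno
        refine ⟨∑ k ∈ Finset.range (n+1), a ^ (n-k) * b ^ k *
          (fun k => if k = 0 then y 0 - 1 else y k) k, ⟨_, rfl⟩, ?_⟩
        rw [← hsum, gsum_split n (fun k => a ^ (n-k) * b ^ k * y k),
          gsum_split n (fun k => a ^ (n-k) * b ^ k *
            (fun k => if k = 0 then y 0 - 1 else y k) k)]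
        have hcong : ∑ k ∈ Icc 1 n, a ^ (n-k) * b ^ k * (if k = 0 then y 0 - 1 else y k)
            = ∑ k ∈ Icc 1 n, a ^ (n-k) * b ^ k * y k := by
          refine sum_congr rfl fun k hk => ?_
          rw [mem_Icc] at hk
          rw [if_neg (show k ≠ 0 by omega)]
        simp only [↓reduceIte, Nat.sub_zero, pow_zero, mul_one]
        rw [hcong]
        have hsplit : a ^ n * y 0 = a ^ n * (y 0 - 1) + a ^ n := by
          rw [show y 0 = (y 0 - 1) + 1 from by omega, mul_add, mul_one,
            Nat.add_sub_cancel]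
        omega
      refine ⟨y, fun k hk => hy k hk, ?_⟩
      rw [← hsum, gsum_split n (fun k => a ^ (n-k) * b ^ k * y k)]
      simp [hy0]
    · rintro ⟨r, hr, rfl⟩
      constructor
      · refine ⟨fun k => if k = 0 then 0 else r k, ?_⟩
        rw [gIccSum n 0 r a b, mul_zero, zero_add]
      · rintro ⟨t, ⟨x, rfl⟩, heq⟩
        obtain ⟨y, hy, hsum⟩ := greduce a b n ha x
        have e : ∑ k ∈ Finset.range (n+1), a ^ (n-k) * b ^ k * y k
            = a ^ n * y 0 + ∑ k ∈ Icc 1 n, a ^ (n-k) * b ^ k * y k := by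
          rw [gsum_split n (fun k => a ^ (n-k) * b ^ k * y k)]
          simp
        have key := guniq a b ha hab n (fun k => if k = 0 then 0 else r k)
          (fun k => if k = 0 then y 0 + 1 else y k)
          (fun k h1 h2 => by
            simp only [if_neg (show k ≠ 0 by omega)]
            exact hr k (by rw [mem_Icc]; omega))
          (fun k h1 h2 => by
            simp only [if_neg (show k ≠ 0 by omega)]
            exact hy k (by rw [mem_Icc]; omega))
          (by
            rw [gIccSum n 0 r a b, gIccSum n (y 0 + 1) y a b]
            have h1 : a ^ n * (y 0 + 1) = a ^ n * y 0 + a ^ n := by ring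
            omega)
        have h0 := key 0 (Nat.zero_le n)
        simp at h0
  have part2 : ∀ r r' : ℕ → ℕ, (∀ k ∈ Finset.Icc 1 n, r k < a) →
      (∀ k ∈ Finset.Icc 1 n, r' k < a) →
      (∑ k ∈ Finset.Icc 1 n, a ^ (n - k) * b ^ k * r k) =
        (∑ k ∈ Finset.Icc 1 n, a ^ (n - k) * b ^ k * r' k) →
      ∀ k ∈ Finset.Icc 1 n, r k = r' k := by
    intro r r' hr hr' heq k hk
    have key := guniq a b ha hab n (fun k => if k = 0 then 0 else r k)
      (fun k => if k = 0 then 0 else r' k)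
      (fun k h1 h2 => by
        simp only [if_neg (show k ≠ 0 by omega)]
        exact hr k (by rw [mem_Icc]; omega))
      (fun k h1 h2 => by
        simp only [if_neg (show k ≠ 0 by omega)]
        exact hr' k (by rw [mem_Icc]; omega))
      (by rw [gIccSum n 0 r a b, gIccSum n 0 r' a b, heq])
    rw [mem_Icc] at hk
    have := key k hk.2
    simpa only [if_neg (show k ≠ 0 by omega)] using this
  refine ⟨part1, part2, ?_⟩
  intro F hF
  by_cases ha1 : a = 1
  · exfalso
    apply hF.1
    refine ⟨fun k => if k = 0 then F else 0, ?_⟩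
    rw [Finset.sum_eq_single_of_mem 0 (by rw [mem_range]; omega)
      (fun k _ hk => by simp [hk])]
    simp [ha1]
  by_cases hb1 : b = 1
  · exfalso
    apply hF.1
    refine ⟨fun k => if k = n then F else 0, ?_⟩
    rw [Finset.sum_eq_single_of_mem n (by rw [mem_range]; omega)
      (fun k _ hk => by simp [hk])]
    simp [hb1]
  have ha2 : 2 ≤ a := by omega
  have hb2 : 2 ≤ b := by omega
  set M := ∑ k ∈ Finset.Icc 1 n, (a - 1) * (a ^ (n - k) * b ^ k) with hM
  have hMa : a ^ n ≤ M := gpow_le a b ha2 hb2 n hn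
  have hM_mem : M ∈ {m : ℕ | ∃ r : ℕ → ℕ, (∀ k ∈ Finset.Icc 1 n, r k < a) ∧
      m = ∑ k ∈ Finset.Icc 1 n, a ^ (n - k) * b ^ k * r k} := by
    refine ⟨fun _ => a - 1, fun k hk => by show a - 1 < a; omega, ?_⟩
    rw [hM]
    exact sum_congr rfl fun k _ => by ring
  rw [← part1] at hM_mem
  obtain ⟨hMS, hMno⟩ := hM_mem
  have hFle : F + a ^ n ≤ M := by
    by_contra hlt
    push_neg at hlt
    obtain ⟨r, hr, hmod⟩ := gsurj_mod a b n ha hab F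
    set w := ∑ k ∈ Finset.Icc 1 n, a ^ (n - k) * b ^ k * r k with hw
    have hwM : w ≤ M := by
      rw [hw, hM]
      refine Finset.sum_le_sum fun k hk => ?_
      have h1 : r k ≤ a - 1 := by have := hr k hk; omega
      calc a ^ (n-k) * b ^ k * r k ≤ a ^ (n-k) * b ^ k * (a - 1) :=
            Nat.mul_le_mul_left _ h1
        _ = (a - 1) * (a ^ (n-k) * b ^ k) := by ring
    have hwF : w ≤ F := by
      by_contra hwf
      push_neg at hwf
      have hd : a ^ n ∣ w - F := (Nat.modEq_iff_dvd' (le_of_lt hwf)).mp hmod.symm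
      have := Nat.le_of_dvd (by omega) hd
      omega
    obtain ⟨t, ht⟩ : ∃ t, F = w + a ^ n * t := by
      obtain ⟨t, ht⟩ := (Nat.modEq_iff_dvd' hwF).mp hmod
      exact ⟨t, by omega⟩
    refine hF.1 ⟨fun k => if k = 0 then t else r k, ?_⟩
    rw [gIccSum n t r a b]
    omega
  have hMle : M ≤ F + a ^ n := by
    have hdno : M - a ^ n ∉ geomSG a b n := fun hS => hMno ⟨M - a ^ n, hS, by omega⟩
    have := hF.2 hdno
    omega
  omega
end

section
/- Let n be a positive integer and 0 ≤ k ≤ ν₂(n), where ν₂(n) is the 2-adic valuation of n. Then the Frobenius number of the numerical semigroup S = ⟨n, n+2⁰, n+2¹, ..., n+2^k⟩ is F(S) = n²/2^k + (k-1)n - 1. -/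
/-!
Write `n = 2ᵏ q`. An element `n c + ∑ (n + 2ⁱ) xᵢ` equals `n (c + ∑ xᵢ) + ∑ 2ⁱ xᵢ`, so `m` lies in
the semigroup iff `m = n t + a` with `a` a sum of `w` powers `2⁰, …, 2ᵏ` and `w ≤ t`. Every `a < n`
is such a sum with `w ≤ q - 1 + k` (binary digits below `2ᵏ`, then copies of `2ᵏ`), so all
`m ≥ (q + k - 1) n` lie in the semigroup. Conversely a representation of `(q + k - 1) n - 1` would
write `n e - 1 = 2ᵏ q e - 1` with `e ≥ 1` using at most `q + k - 1 - e` powers, while any such sum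
needs at least `q e - 1 + k`: since it is `-1` modulo `2ᵏ`, after carrying pairs upwards each of
the `k` lowest levels still holds an odd number of powers, one of which can never be paired.
-/

open Finset

def powShiftSemigroup (n k : ℕ) : Set ℕ :=
  {m | ∃ c : ℕ, ∃ x : ℕ → ℕ, m = n * c + ∑ i ∈ range (k + 1), (n + 2 ^ i) * x i}

lemma sum_add_two_pow_mul (n k : ℕ) (x : ℕ → ℕ) :
    ∑ i ∈ range (k + 1), (n + 2 ^ i) * x i
      = n * ∑ i ∈ range (k + 1), x i + ∑ i ∈ range (k + 1), 2 ^ i * x i := by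
  rw [mul_sum, ← sum_add_distrib]
  exact sum_congr rfl fun i _ => by ring

lemma exists_sum_two_pow_mul_eq_of_lt (k : ℕ) :
    ∀ {q a : ℕ}, a < 2 ^ k * q →
      ∃ x : ℕ → ℕ, ∑ i ∈ range (k + 1), 2 ^ i * x i = a ∧ ∑ i ∈ range (k + 1), x i + 1 ≤ q + k := by
  induction k with
  | zero => intro q a ha; exact ⟨fun _ => a, by simp, by simpa using ha⟩
  | succ k ih =>
    intro q a ha
    obtain ⟨y, hy, hyw⟩ := ih (a := a / 2)
      ((Nat.div_lt_iff_lt_mul two_pos).2 (by rw [pow_succ] at ha; linarith))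
    refine ⟨fun i => if i = 0 then a % 2 else y (i - 1), ?_, ?_⟩
    · rw [sum_range_succ']
      simp only [add_tsub_cancel_right, Nat.add_one_ne_zero, if_false, pow_succ, mul_comm _ 2,
        mul_assoc, ← mul_sum, hy]
      simp only [if_true, pow_zero, one_mul]
      omega
    · rw [sum_range_succ']
      simp only [add_tsub_cancel_right, Nat.add_one_ne_zero, if_false, if_true]
      omega

lemma le_sum_add_one_of_sum_two_pow_mul_add_one_eq (k : ℕ) :
    ∀ {x : ℕ → ℕ} {m : ℕ}, ∑ i ∈ range (k + 1), 2 ^ i * x i + 1 = 2 ^ k * m →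
      m + k ≤ ∑ i ∈ range (k + 1), x i + 1 := by
  induction k with
  | zero =>
    intro x m h
    simp only [zero_add, range_one, sum_singleton, pow_zero, one_mul, add_zero] at h ⊢
    omega
  | succ k ih =>
    intro x m h
    rw [sum_range_succ'] at h
    simp only [pow_succ, mul_comm _ 2, mul_assoc, ← mul_sum, pow_zero, one_mul] at h
    -- `x 0` is odd; the pairs in `x 0 - 1` are carried into `x 1`.
    set u := x 0 / 2
    let y : ℕ → ℕ := fun i => x (i + 1) + if i = 0 then u else 0
    have hy : ∑ i ∈ range (k + 1), 2 ^ i * y i = ∑ i ∈ range (k + 1), 2 ^ i * x (i + 1) + u := by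
      simp [y, mul_add, sum_add_distrib]
    have hyw : ∑ i ∈ range (k + 1), y i = ∑ i ∈ range (k + 1), x (i + 1) + u := by
      simp [y, sum_add_distrib]
    have := ih (x := y) (m := m) (by rw [hy]; omega)
    rw [sum_range_succ']
    omega

lemma mem_powShiftSemigroup_of_le {q k m : ℕ} (hq : 0 < q)
    (hm : (q + k - 1) * (2 ^ k * q) ≤ m) : m ∈ powShiftSemigroup (2 ^ k * q) k := by
  set n := 2 ^ k * q
  have hn : 0 < n := by positivity
  obtain ⟨x, hx, hxw⟩ := exists_sum_two_pow_mul_eq_of_lt k (Nat.mod_lt m hn)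
  have ht : q + k - 1 ≤ m / n := (Nat.le_div_iff_mul_le hn).2 hm
  refine ⟨m / n - ∑ i ∈ range (k + 1), x i, x, ?_⟩
  rw [sum_add_two_pow_mul, hx, ← add_assoc, ← mul_add, Nat.sub_add_cancel (by omega)]
  exact (Nat.div_add_mod m n).symm

lemma sub_one_notMem_powShiftSemigroup {q k : ℕ} (hq : 0 < q) (hqk : 2 ≤ q + k) :
    (q + k - 1) * (2 ^ k * q) - 1 ∉ powShiftSemigroup (2 ^ k * q) k := by
  set n := 2 ^ k * q
  rintro ⟨c, x, hc⟩
  rw [sum_add_two_pow_mul] at hc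
  set W := ∑ i ∈ range (k + 1), x i
  set A := ∑ i ∈ range (k + 1), 2 ^ i * x i
  have hpos : 0 < (q + k - 1) * n := Nat.mul_pos (by omega) (by positivity)
  have hrepr : n * (c + W) + (A + 1) = n * (q + k - 1) := by
    rw [mul_comm n (q + k - 1), mul_add]; omega
  have hlt : c + W < q + k - 1 := Nat.lt_of_mul_lt_mul_left (a := n) (by omega)
  obtain ⟨e, he⟩ := Nat.exists_eq_add_of_lt hlt
  have hA : A + 1 = 2 ^ k * (q * (e + 1)) := by
    rw [he] at hrepr; simp only [n] at hrepr ⊢; nlinarith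
  have hW := le_sum_add_one_of_sum_two_pow_mul_add_one_eq k hA
  have : q ≤ q * (e + 1) := Nat.le_mul_of_pos_right q e.succ_pos
  omega

lemma isGreatest_compl_powShiftSemigroup {q k : ℕ} (hq : 0 < q) (hqk : 2 ≤ q + k) :
    IsGreatest (powShiftSemigroup (2 ^ k * q) k)ᶜ ((q + k - 1) * (2 ^ k * q) - 1) := by
  refine ⟨sub_one_notMem_powShiftSemigroup hq hqk, fun m hm => ?_⟩
  by_contra! h
  exact hm (mem_powShiftSemigroup_of_le hq (by omega))

/-- Shifted powers of 2, case k ≤ ν₂(n): the Frobenius number of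
⟨n, n+2⁰, n+2¹, …, n+2ᵏ⟩ is n²/2ᵏ + (k-1)n - 1. -/
theorem stmt_14 (n k : ℕ) (hn : 2 ≤ n) (hk : k ≤ padicValNat 2 n) (F : ℕ)
    (hF : IsGreatest {m : ℕ | ¬∃ c : ℕ, ∃ x : ℕ → ℕ,
        m = n * c + ∑ i ∈ Finset.range (k + 1), (n + 2 ^ i) * x i} F) :
    (F : ℚ) = (n : ℚ) ^ 2 / 2 ^ k + ((k : ℚ) - 1) * n - 1 := by
  obtain ⟨q, rfl⟩ : 2 ^ k ∣ n := (pow_dvd_pow 2 hk).trans pow_padicValNat_dvd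
  have hq : 0 < q := Nat.pos_of_ne_zero (by rintro rfl; simp at hn)
  have hqk : 2 ≤ q + k := by
    rcases k with _ | k
    · simpa using hn
    · omega
  have hF' : F = (q + k - 1) * (2 ^ k * q) - 1 :=
    hF.unique (isGreatest_compl_powShiftSemigroup hq hqk)
  have hpos : 1 ≤ (q + k - 1) * (2 ^ k * q) := Nat.mul_pos (by omega) (by positivity)
  rw [hF', Nat.cast_sub hpos, Nat.cast_mul, Nat.cast_sub (by omega : 1 ≤ q + k)]
  push_cast
  field_simp
  ring
end

section
/- Let k ≥ 1 and a₁,...,a_k, b₁,...,b_k be positive integers with gcd(aᵢ, bⱼ) = 1 whenever i ≥ j. For 0 ≤ i ≤ k define nᵢ := a_{i+1}···a_k · b₁···bᵢ. Then gcd(n₀,...,n_k) = 1, S := ⟨n₀,...,n_k⟩ is a numerical semigroup, and its Apéry set with respect to n₀ is Ap(S, n₀) = { Σ_{i=1}^{k} rᵢ nᵢ : 0 ≤ rᵢ < aᵢ }, with every element of this set having a unique such representation; consequently F(S) = -n₀ + Σ_{i=1}^{k} (aᵢ - 1) nᵢ. -/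
/-- The i-th term of a compound sequence: nᵢ = a_{i+1}⋯a_k · b₁⋯bᵢ. -/
def compoundSeq (a b : ℕ → ℕ) (k i : ℕ) : ℕ :=
  (∏ t ∈ Finset.Icc (i + 1) k, a t) * ∏ t ∈ Finset.Icc 1 i, b t

/-- The semigroup generated by a compound sequence n₀, …, n_k. -/
def compoundSG (a b : ℕ → ℕ) (k : ℕ) : Set ℕ :=
  {m : ℕ | ∃ x : ℕ → ℕ, m = ∑ i ∈ Finset.Icc 0 k, compoundSeq a b k i * x i}

/-! Passing from `k` to `k + 1` multiplies `n₀, …, n_k` by `a_{k+1}` and appends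
`n_{k+1} = b_{k+1} n_k`, which is prime to `a_{k+1}`. By induction on `k`, the sums `Σ rᵢnᵢ` with
digits `rᵢ < aᵢ` are therefore pairwise incongruent modulo `n₀ = a₁⋯a_k`, and, carrying
`aᵢnᵢ = bᵢnᵢ₋₁` downwards, every element of `S` is `c n₀ + Σ rᵢnᵢ` with such digits. As there
are exactly `n₀` digit vectors, each residue class modulo `n₀` contains exactly one of these sums,
and it is the least element of `S` in that class. -/

open Finset

section CompoundSequence

variable {a b : ℕ → ℕ}

theorem compoundSeq_zero (k : ℕ) : compoundSeq a b k 0 = ∏ t ∈ Icc 1 k, a t := by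
  simp [compoundSeq]

theorem compoundSeq_self (k : ℕ) : compoundSeq a b k k = ∏ t ∈ Icc 1 k, b t := by
  simp [compoundSeq]

theorem compoundSeq_succ_of_le {k i : ℕ} (h : i ≤ k) :
    compoundSeq a b (k + 1) i = a (k + 1) * compoundSeq a b k i := by
  rw [compoundSeq, compoundSeq, prod_Icc_succ_top (by omega)]
  ring

theorem compoundSeq_succ_self (k : ℕ) :
    compoundSeq a b (k + 1) (k + 1) = b (k + 1) * compoundSeq a b k k := by
  rw [compoundSeq_self, compoundSeq_self, prod_Icc_succ_top (by omega), mul_comm]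

theorem compoundSeq_zero_pos {k : ℕ} (hapos : ∀ i ∈ Icc 1 k, 0 < a i) :
    0 < compoundSeq a b k 0 :=
  compoundSeq_zero (b := b) k ▸ prod_pos hapos

theorem coprime_compoundSeq_self {k : ℕ} (hk : 1 ≤ k)
    (hcop : ∀ i ∈ Icc 1 k, ∀ j ∈ Icc 1 k, j ≤ i → Nat.Coprime (a i) (b j)) :
    Nat.Coprime (a k) (compoundSeq a b k k) := by
  rw [compoundSeq_self]
  exact Nat.Coprime.prod_right fun j hj =>
    hcop k (mem_Icc.2 ⟨hk, le_rfl⟩) j hj (mem_Icc.1 hj).2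

theorem sum_compoundSeq_succ {m k : ℕ} (hm : m ≤ k + 1) (x : ℕ → ℕ) :
    ∑ i ∈ Icc m (k + 1), compoundSeq a b (k + 1) i * x i =
      a (k + 1) * ∑ i ∈ Icc m k, compoundSeq a b k i * x i +
        compoundSeq a b (k + 1) (k + 1) * x (k + 1) := by
  rw [sum_Icc_succ_top hm, mul_sum]
  congr 1
  refine sum_congr rfl fun i hi => ?_
  rw [compoundSeq_succ_of_le (mem_Icc.1 hi).2, mul_assoc]

end CompoundSequence

def aperySum (a b : ℕ → ℕ) (k : ℕ) (r : ℕ → ℕ) : ℕ :=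
  ∑ i ∈ Icc 1 k, r i * compoundSeq a b k i

section AperySum

variable {a b : ℕ → ℕ}

theorem aperySum_succ (k : ℕ) (r : ℕ → ℕ) :
    aperySum a b (k + 1) r =
      a (k + 1) * aperySum a b k r + r (k + 1) * compoundSeq a b (k + 1) (k + 1) := by
  simp only [aperySum, mul_comm (r _)]
  exact sum_compoundSeq_succ (by omega) r

theorem add_aperySum_mem_compoundSG (k c : ℕ) (r : ℕ → ℕ) :
    c * compoundSeq a b k 0 + aperySum a b k r ∈ compoundSG a b k := by
  refine ⟨Function.update r 0 c, ?_⟩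
  rw [← insert_Icc_add_one_left_eq_Icc (Nat.zero_le k), sum_insert (by simp), aperySum]
  simp only [Function.update_self, zero_add, mul_comm c]
  congr 1
  refine sum_congr rfl fun i hi => ?_
  rw [Function.update_of_ne (by grind), mul_comm]

theorem exists_add_aperySum_eq_of_mem {k m : ℕ} (hapos : ∀ i ∈ Icc 1 k, 0 < a i)
    (hm : m ∈ compoundSG a b k) :
    ∃ c r, (∀ i ∈ Icc 1 k, r i < a i) ∧ m = c * compoundSeq a b k 0 + aperySum a b k r := by
  obtain ⟨x, rfl⟩ := hm
  induction k generalizing x with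
  | zero => exact ⟨x 0, 0, by simp, by simp [aperySum, mul_comm]⟩
  | succ k ih =>
    have ha : 0 < a (k + 1) := hapos _ (by simp)
    obtain ⟨q, ρ, hρ, hx⟩ : ∃ q ρ, ρ < a (k + 1) ∧ x (k + 1) = a (k + 1) * q + ρ :=
      ⟨_, _, Nat.mod_lt _ ha, (Nat.div_add_mod _ _).symm⟩
    -- `(a_{k+1} q) n_{k+1} = a_{k+1} (b_{k+1} q) n_k`: move this part to the coefficient of `n_k`
    obtain ⟨c, r, hr, hsum⟩ := ih (fun i hi => hapos i (by grind))
      (x + Pi.single k (b (k + 1) * q))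
    refine ⟨c, Function.update r (k + 1) ρ, fun i hi => ?_, ?_⟩
    · rcases eq_or_ne i (k + 1) with rfl | hne
      · simpa using hρ
      · rw [Function.update_of_ne hne]; exact hr i (by grind)
    have hlow : aperySum a b k (Function.update r (k + 1) ρ) = aperySum a b k r :=
      sum_congr rfl fun i hi => by rw [Function.update_of_ne (by grind)]
    simp only [Pi.add_apply, mul_add, sum_add_distrib, Pi.single_apply, mul_ite, mul_zero,
      sum_ite_eq', mem_Icc, le_refl, zero_le, and_self, if_true] at hsum
    rw [sum_compoundSeq_succ (Nat.zero_le _), aperySum_succ, hlow, Function.update_self,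
      compoundSeq_succ_of_le (Nat.zero_le k), compoundSeq_succ_self, hx]
    calc _ = a (k + 1) * (∑ i ∈ Icc 0 k, compoundSeq a b k i * x i +
          compoundSeq a b k k * (b (k + 1) * q)) +
          ρ * (b (k + 1) * compoundSeq a b k k) := by ring
      _ = _ := by rw [hsum]; ring

theorem eq_of_aperySum_modEq {k : ℕ}
    (hcop : ∀ i ∈ Icc 1 k, ∀ j ∈ Icc 1 k, j ≤ i → Nat.Coprime (a i) (b j)) {r r' : ℕ → ℕ}
    (hr : ∀ i ∈ Icc 1 k, r i < a i) (hr' : ∀ i ∈ Icc 1 k, r' i < a i)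
    (h : aperySum a b k r ≡ aperySum a b k r' [MOD compoundSeq a b k 0]) :
    ∀ i ∈ Icc 1 k, r i = r' i := by
  induction k with
  | zero => simp
  | succ k ih =>
    rw [aperySum_succ, aperySum_succ, compoundSeq_succ_of_le (Nat.zero_le k)] at h
    -- modulo `a (k+1)` only the top terms survive, and `n_{k+1}` is a unit there
    have htop : r (k + 1) = r' (k + 1) := by
      have hmul : a (k + 1) * aperySum a b k r ≡ a (k + 1) * aperySum a b k r'
          [MOD a (k + 1)] := by
        simp [Nat.ModEq]
      refine Nat.ModEq.eq_of_lt_of_lt ?_ (hr _ (by simp)) (hr' _ (by simp))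
      exact Nat.ModEq.cancel_right_of_coprime (coprime_compoundSeq_self (by omega) hcop)
        (hmul.add_left_cancel (h.of_mul_right _))
    rw [htop] at h
    have hlow := ih (fun i hi j hj hji => hcop i (by grind) j (by grind) hji)
      (fun i hi => hr i (by grind)) (fun i hi => hr' i (by grind))
      (Nat.ModEq.mul_left_cancel' (hr' _ (by simp)).ne_bot (h.add_right_cancel' _))
    intro i hi
    rcases eq_or_ne i (k + 1) with rfl | hne
    · exact htop
    · exact hlow i (by grind)

theorem exists_aperySum_modEq {k : ℕ} (hapos : ∀ i ∈ Icc 1 k, 0 < a i)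
    (hcop : ∀ i ∈ Icc 1 k, ∀ j ∈ Icc 1 k, j ≤ i → Nat.Coprime (a i) (b j)) (m : ℕ) :
    ∃ r, (∀ i ∈ Icc 1 k, r i < a i) ∧ m ≡ aperySum a b k r [MOD compoundSeq a b k 0] := by
  have hn0 := compoundSeq_zero_pos (b := b) hapos
  let digits : ((i : Icc 1 k) → Fin (a i)) → ℕ → ℕ :=
    fun r j => if h : j ∈ Icc 1 k then r ⟨j, h⟩ else 0
  have hdigits (r) : ∀ i ∈ Icc 1 k, digits r i < a i := fun i hi => by
    simp only [digits, dif_pos hi]; exact (r _).isLt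
  -- an injection between two sets of size `n₀`
  let residue (r : (i : Icc 1 k) → Fin (a i)) : Fin (compoundSeq a b k 0) :=
    ⟨aperySum a b k (digits r) % compoundSeq a b k 0, Nat.mod_lt _ hn0⟩
  have hinj : Function.Injective residue := fun r r' h => funext fun i => Fin.ext <| by
    have := eq_of_aperySum_modEq hcop (hdigits r) (hdigits r') (Fin.mk.inj_iff.mp h) i i.2
    simpa only [digits, dif_pos i.2] using this
  have hcard : Fintype.card ((i : Icc 1 k) → Fin (a i)) = compoundSeq a b k 0 := by
    simp [Fintype.card_pi, compoundSeq_zero, prod_attach]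
  obtain ⟨r, hr⟩ := ((Fintype.bijective_iff_injective_and_card residue).2
    ⟨hinj, by simpa using hcard⟩).2 ⟨m % compoundSeq a b k 0, Nat.mod_lt _ hn0⟩
  exact ⟨digits r, hdigits r, (Fin.mk.inj_iff.mp hr).symm⟩

end AperySum

section NumericalSemigroup

variable {a b : ℕ → ℕ} {k : ℕ}

theorem gcd_compoundSeq_eq_one (hapos : ∀ i ∈ Icc 1 k, 0 < a i)
    (hcop : ∀ i ∈ Icc 1 k, ∀ j ∈ Icc 1 k, j ≤ i → Nat.Coprime (a i) (b j)) :
    (Icc 0 k).gcd (compoundSeq a b k) = 1 := by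
  obtain ⟨r, -, h⟩ := exists_aperySum_modEq hapos hcop 1
  refine Nat.dvd_one.1 ((h.dvd_iff (gcd_dvd (by simp))).2 (dvd_sum fun i hi => ?_))
  exact dvd_mul_of_dvd_right (gcd_dvd (by grind)) _

theorem not_exists_mem_add_compoundSeq_zero_eq_aperySum (hapos : ∀ i ∈ Icc 1 k, 0 < a i)
    (hcop : ∀ i ∈ Icc 1 k, ∀ j ∈ Icc 1 k, j ≤ i → Nat.Coprime (a i) (b j)) {r : ℕ → ℕ}
    (hr : ∀ i ∈ Icc 1 k, r i < a i) :
    ¬∃ t ∈ compoundSG a b k, aperySum a b k r = t + compoundSeq a b k 0 := by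
  rintro ⟨t, ht, hrt⟩
  obtain ⟨c, r', hr', rfl⟩ := exists_add_aperySum_eq_of_mem hapos ht
  have hmod : aperySum a b k r ≡ aperySum a b k r' [MOD compoundSeq a b k 0] := by
    rw [hrt, add_right_comm, ← Nat.succ_mul, add_comm]
    exact Nat.add_mul_mod_self_right _ _ _
  have heq : aperySum a b k r = aperySum a b k r' :=
    sum_congr rfl fun i hi => by rw [eq_of_aperySum_modEq hcop hr hr' hmod i hi]
  have := compoundSeq_zero_pos (b := b) hapos
  omega

theorem aperySet_compoundSG (hapos : ∀ i ∈ Icc 1 k, 0 < a i)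
    (hcop : ∀ i ∈ Icc 1 k, ∀ j ∈ Icc 1 k, j ≤ i → Nat.Coprime (a i) (b j)) :
    {s : ℕ | s ∈ compoundSG a b k ∧ ¬∃ t ∈ compoundSG a b k, s = t + compoundSeq a b k 0} =
      {m : ℕ | ∃ r : ℕ → ℕ, (∀ i ∈ Icc 1 k, r i < a i) ∧ m = aperySum a b k r} := by
  ext s
  constructor
  · rintro ⟨hs, hnot⟩
    obtain ⟨c, r, hr, rfl⟩ := exists_add_aperySum_eq_of_mem hapos hs
    rcases c with _ | c
    · exact ⟨r, hr, by simp⟩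
    · exact (hnot ⟨_, add_aperySum_mem_compoundSG k c r, by ring⟩).elim
  · rintro ⟨r, hr, rfl⟩
    refine ⟨by simpa using add_aperySum_mem_compoundSG (a := a) (b := b) k 0 r, ?_⟩
    exact not_exists_mem_add_compoundSeq_zero_eq_aperySum hapos hcop hr

theorem add_compoundSeq_zero_le_of_not_mem (hapos : ∀ i ∈ Icc 1 k, 0 < a i)
    (hcop : ∀ i ∈ Icc 1 k, ∀ j ∈ Icc 1 k, j ≤ i → Nat.Coprime (a i) (b j)) {m : ℕ}
    (hm : m ∉ compoundSG a b k) :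
    m + compoundSeq a b k 0 ≤ aperySum a b k (fun i => a i - 1) := by
  obtain ⟨r, hr, hmod⟩ := exists_aperySum_modEq hapos hcop m
  have hmax : aperySum a b k r ≤ aperySum a b k (fun i => a i - 1) :=
    sum_le_sum fun i hi => Nat.mul_le_mul_right _ (Nat.le_sub_one_of_lt (hr i hi))
  rcases le_or_gt (aperySum a b k r) m with hle | hlt
  · obtain ⟨c, hc⟩ := (Nat.modEq_iff_dvd' hle).1 hmod.symm
    refine absurd ?_ hm
    convert add_aperySum_mem_compoundSG k c r using 1
    rw [mul_comm]
    omega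
  · obtain ⟨c, hc⟩ := (Nat.modEq_iff_dvd' hlt.le).1 hmod
    have := Nat.le_of_dvd (by omega) ⟨c, hc⟩
    omega

theorem add_compoundSeq_zero_eq_of_isGreatest (hapos : ∀ i ∈ Icc 1 k, 0 < a i)
    (hcop : ∀ i ∈ Icc 1 k, ∀ j ∈ Icc 1 k, j ≤ i → Nat.Coprime (a i) (b j)) {F : ℕ}
    (hF : IsGreatest {m : ℕ | m ∉ compoundSG a b k} F) :
    F + compoundSeq a b k 0 = aperySum a b k (fun i => a i - 1) := by
  have hupper := add_compoundSeq_zero_le_of_not_mem hapos hcop hF.1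
  have hgap : aperySum a b k (fun i => a i - 1) - compoundSeq a b k 0 ∉ compoundSG a b k :=
    fun hmem => not_exists_mem_add_compoundSeq_zero_eq_aperySum hapos hcop
      (fun i hi => Nat.sub_lt (hapos i hi) one_pos) ⟨_, hmem, by omega⟩
  have := hF.2 hgap
  omega

end NumericalSemigroup

theorem stmt_18_general (k : ℕ) (a b : ℕ → ℕ)
    (hapos : ∀ i ∈ Finset.Icc 1 k, 0 < a i)
    (hcop : ∀ i ∈ Finset.Icc 1 k, ∀ j ∈ Finset.Icc 1 k, j ≤ i →
      Nat.Coprime (a i) (b j)) :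
    (Finset.Icc 0 k).gcd (compoundSeq a b k) = 1 ∧
    ({s : ℕ | s ∈ compoundSG a b k ∧
        ¬∃ t ∈ compoundSG a b k, s = t + compoundSeq a b k 0} =
      {m : ℕ | ∃ r : ℕ → ℕ, (∀ i ∈ Finset.Icc 1 k, r i < a i) ∧
        m = ∑ i ∈ Finset.Icc 1 k, r i * compoundSeq a b k i}) ∧
    (∀ r r' : ℕ → ℕ,
      (∀ i ∈ Finset.Icc 1 k, r i < a i) → (∀ i ∈ Finset.Icc 1 k, r' i < a i) →
      (∑ i ∈ Finset.Icc 1 k, r i * compoundSeq a b k i) =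
        (∑ i ∈ Finset.Icc 1 k, r' i * compoundSeq a b k i) →
      ∀ i ∈ Finset.Icc 1 k, r i = r' i) ∧
    (∀ F : ℕ, IsGreatest {m : ℕ | m ∉ compoundSG a b k} F →
      F + compoundSeq a b k 0 =
        ∑ i ∈ Finset.Icc 1 k, (a i - 1) * compoundSeq a b k i) :=
  ⟨gcd_compoundSeq_eq_one hapos hcop,
    aperySet_compoundSG hapos hcop,
    fun _ _ hr hr' h => eq_of_aperySum_modEq hcop hr hr' (congrArg (· % _) h),
    fun _ hF => add_compoundSeq_zero_eq_of_isGreatest hapos hcop hF⟩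

/-- Compound sequences: gcd(n₀,…,n_k) = 1, the Apéry set of S = ⟨n₀,…,n_k⟩ with respect
to n₀ is {Σ rᵢnᵢ : 0 ≤ rᵢ < aᵢ} with unique representations, and
F(S) = -n₀ + Σ (aᵢ-1)nᵢ. -/
theorem stmt_18 (k : ℕ) (hk : 1 ≤ k) (a b : ℕ → ℕ)
    (hapos : ∀ i ∈ Finset.Icc 1 k, 0 < a i) (hbpos : ∀ i ∈ Finset.Icc 1 k, 0 < b i)
    (hcop : ∀ i ∈ Finset.Icc 1 k, ∀ j ∈ Finset.Icc 1 k, j ≤ i →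
      Nat.Coprime (a i) (b j)) :
    (Finset.Icc 0 k).gcd (compoundSeq a b k) = 1 ∧
    ({s : ℕ | s ∈ compoundSG a b k ∧
        ¬∃ t ∈ compoundSG a b k, s = t + compoundSeq a b k 0} =
      {m : ℕ | ∃ r : ℕ → ℕ, (∀ i ∈ Finset.Icc 1 k, r i < a i) ∧
        m = ∑ i ∈ Finset.Icc 1 k, r i * compoundSeq a b k i}) ∧
    (∀ r r' : ℕ → ℕ,
      (∀ i ∈ Finset.Icc 1 k, r i < a i) → (∀ i ∈ Finset.Icc 1 k, r' i < a i) →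
      (∑ i ∈ Finset.Icc 1 k, r i * compoundSeq a b k i) =
        (∑ i ∈ Finset.Icc 1 k, r' i * compoundSeq a b k i) →
      ∀ i ∈ Finset.Icc 1 k, r i = r' i) ∧
    (∀ F : ℕ, IsGreatest {m : ℕ | m ∉ compoundSG a b k} F →
      F + compoundSeq a b k 0 =
        ∑ i ∈ Finset.Icc 1 k, (a i - 1) * compoundSeq a b k i) :=
  stmt_18_general k a b hapos hcop
end

section
/- Let a, b, c be positive integers with c ∣ lcm(a,b) and gcd(a,b,c) = 1. Set g₁ := gcd(a,c) and g₂ := gcd(b,c). Then gcd(g₁,g₂) = 1, c = g₁g₂, and the Frobenius number of the numerical semigroup ⟨a,b,c⟩ is F(a,b,c) = (g₂ - 1)a + (g₁ - 1)b - c; equivalently, Ap(⟨a,b,c⟩, c) = { r·a + s·b : 0 ≤ r < g₂, 0 ≤ s < g₁ } with unique representations. -/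
/-- The semigroup generated by three positive integers a, b, c. -/
def tripleSG (a b c : ℕ) : Set ℕ :=
  {m : ℕ | ∃ x y z : ℕ, m = a * x + b * y + c * z}

/-- Special triplets: if c ∣ lcm(a,b) and gcd(a,b,c) = 1, then with g₁ = gcd(a,c),
g₂ = gcd(b,c): gcd(g₁,g₂) = 1, c = g₁g₂, the Apéry set of ⟨a,b,c⟩ with respect to c
is {ra + sb : 0 ≤ r < g₂, 0 ≤ s < g₁} with unique representations, and
F(a,b,c) = (g₂-1)a + (g₁-1)b - c. -/
theorem stmt_19 (a b c : ℕ) (ha : 0 < a) (hb : 0 < b) (hc : 0 < c)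
    (hdvd : c ∣ Nat.lcm a b) (hgcd : Nat.gcd a (Nat.gcd b c) = 1) :
    Nat.Coprime (Nat.gcd a c) (Nat.gcd b c) ∧
    c = Nat.gcd a c * Nat.gcd b c ∧
    ({s : ℕ | s ∈ tripleSG a b c ∧ ¬∃ t ∈ tripleSG a b c, s = t + c} =
      {m : ℕ | ∃ r s : ℕ, r < Nat.gcd b c ∧ s < Nat.gcd a c ∧ m = r * a + s * b}) ∧
    (∀ r s r' s' : ℕ, r < Nat.gcd b c → s < Nat.gcd a c → r' < Nat.gcd b c →
      s' < Nat.gcd a c → r * a + s * b = r' * a + s' * b → r = r' ∧ s = s') ∧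
    (∀ F : ℕ, IsGreatest {m : ℕ | m ∉ tripleSG a b c} F →
      F + c = (Nat.gcd b c - 1) * a + (Nat.gcd a c - 1) * b) := by
  classical
  set g₁ := Nat.gcd a c with hg1
  set g₂ := Nat.gcd b c with hg2
  have hg1a : g₁ ∣ a := Nat.gcd_dvd_left a c
  have hg1c : g₁ ∣ c := Nat.gcd_dvd_right a c
  have hg2b : g₂ ∣ b := Nat.gcd_dvd_left b c
  have hg2c : g₂ ∣ c := Nat.gcd_dvd_right b c
  have hg1pos : 0 < g₁ := Nat.gcd_pos_of_pos_left c ha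
  have hg2pos : 0 < g₂ := Nat.gcd_pos_of_pos_left c hb
  have hcop : Nat.Coprime g₁ g₂ := by
    have h1 : Nat.gcd g₁ g₂ ∣ Nat.gcd a (Nat.gcd b c) :=
      Nat.dvd_gcd ((Nat.gcd_dvd_left g₁ g₂).trans hg1a) (Nat.gcd_dvd_right g₁ g₂)
    rw [hgcd] at h1
    exact Nat.eq_one_of_dvd_one h1
  have hceq : c = g₁ * g₂ := by
    have h1 : g₁ * g₂ ∣ c := Nat.Coprime.mul_dvd_of_dvd_of_dvd hcop hg1c hg2c
    have hcab : c ∣ a * b := hdvd.trans (Nat.lcm_dvd_mul a b)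
    have h2 : c ∣ g₁ * g₂ := by
      have h3 : Nat.gcd c (a * b) ∣ Nat.gcd c a * Nat.gcd c b := gcd_mul_dvd_mul_gcd c a b
      rw [Nat.gcd_eq_left hcab] at h3
      rwa [Nat.gcd_comm c a, Nat.gcd_comm c b] at h3
    exact Nat.dvd_antisymm h2 h1
  have hag2 : Nat.gcd a g₂ = 1 := by
    have h1 : Nat.gcd a g₂ ∣ Nat.gcd g₁ g₂ :=
      Nat.dvd_gcd (Nat.dvd_gcd (Nat.gcd_dvd_left a g₂) ((Nat.gcd_dvd_right a g₂).trans hg2c))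
        (Nat.gcd_dvd_right a g₂)
    rw [hcop] at h1
    exact Nat.eq_one_of_dvd_one h1
  have hbg1 : Nat.gcd b g₁ = 1 := by
    have h1 : Nat.gcd b g₁ ∣ Nat.gcd g₁ g₂ :=
      Nat.dvd_gcd (Nat.gcd_dvd_right b g₁)
        (Nat.dvd_gcd (Nat.gcd_dvd_left b g₁) ((Nat.gcd_dvd_right b g₁).trans hg1c))
    rw [hcop] at h1
    exact Nat.eq_one_of_dvd_one h1
  obtain ⟨u, hu⟩ : c ∣ a * g₂ := by
    obtain ⟨a', ha'⟩ := hg1a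
    exact ⟨a', by rw [ha', hceq]; ring⟩
  obtain ⟨v, hv⟩ : c ∣ b * g₁ := by
    obtain ⟨b', hb'⟩ := hg2b
    exact ⟨b', by rw [hb', hceq]; ring⟩
  have hupos : 0 < u := by
    rcases Nat.eq_zero_or_pos u with h | h
    · exfalso; rw [h, mul_zero] at hu
      have h2 : 0 < a * g₂ := Nat.mul_pos ha hg2pos
      omega
    · exact h
  have hvpos : 0 < v := by
    rcases Nat.eq_zero_or_pos v with h | h
    · exfalso; rw [h, mul_zero] at hv
      have h2 : 0 < b * g₁ := Nat.mul_pos hb hg1pos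
      omega
    · exact h
  -- reduction of small combinations
  have reduce : ∀ x y : ℕ,
      a * x + b * y = (x % g₂) * a + (y % g₁) * b + c * (u * (x / g₂) + v * (y / g₁)) := by
    intro x y
    have hxd : x = g₂ * (x / g₂) + x % g₂ := (Nat.div_add_mod x g₂).symm
    have hyd : y = g₁ * (y / g₁) + y % g₁ := (Nat.div_add_mod y g₁).symm
    calc a * x + b * y
        = a * (g₂ * (x / g₂) + x % g₂) + b * (g₁ * (y / g₁) + y % g₁) := by
          rw [← hxd, ← hyd]
      _ = (a * g₂) * (x / g₂) + (b * g₁) * (y / g₁) + ((x % g₂) * a + (y % g₁) * b) := by ring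
      _ = (x % g₂) * a + (y % g₁) * b + c * (u * (x / g₂) + v * (y / g₁)) := by
          rw [hu, hv]; ring
  -- the key structural lemma
  have key : ∀ r s x y w : ℕ, r < g₂ → s < g₁ → r * a + s * b = a * x + b * y + c * w →
      w = 0 ∧ x = r ∧ y = s := by
    intro r s x y w hr hs heq
    have hx : x % g₂ = r := by
      have h1 : r * a % g₂ = x * a % g₂ := by
        obtain ⟨p, hp⟩ : g₂ ∣ s * b := hg2b.mul_left s
        obtain ⟨q, hq⟩ : g₂ ∣ b * y + c * w := dvd_add (hg2b.mul_right y) (hg2c.mul_right w)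
        have heq' : r * a + g₂ * p = x * a + g₂ * q := by
          rw [← hp, ← hq]; linarith [heq]
        calc r * a % g₂ = (r * a + g₂ * p) % g₂ := by
              rw [mul_comm g₂ p, Nat.add_mul_mod_self_right]
          _ = (x * a + g₂ * q) % g₂ := by rw [heq']
          _ = x * a % g₂ := by rw [mul_comm g₂ q, Nat.add_mul_mod_self_right]
      have h2 : r ≡ x [MOD g₂] :=
        Nat.ModEq.cancel_right_of_coprime (by rw [Nat.gcd_comm]; exact hag2) h1
      have h3 : r % g₂ = r := Nat.mod_eq_of_lt hr
      unfold Nat.ModEq at h2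
      omega
    have hy : y % g₁ = s := by
      have h1 : s * b % g₁ = y * b % g₁ := by
        obtain ⟨p, hp⟩ : g₁ ∣ r * a := hg1a.mul_left r
        obtain ⟨q, hq⟩ : g₁ ∣ a * x + c * w := dvd_add (hg1a.mul_right x) (hg1c.mul_right w)
        have heq' : s * b + g₁ * p = y * b + g₁ * q := by
          rw [← hp, ← hq]; linarith [heq]
        calc s * b % g₁ = (s * b + g₁ * p) % g₁ := by
              rw [mul_comm g₁ p, Nat.add_mul_mod_self_right]
          _ = (y * b + g₁ * q) % g₁ := by rw [heq']
          _ = y * b % g₁ := by rw [mul_comm g₁ q, Nat.add_mul_mod_self_right]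
      have h2 : s ≡ y [MOD g₁] :=
        Nat.ModEq.cancel_right_of_coprime (by rw [Nat.gcd_comm]; exact hbg1) h1
      have h3 : s % g₁ = s := Nat.mod_eq_of_lt hs
      unfold Nat.ModEq at h2
      omega
    have hk := reduce x y
    rw [hx, hy] at hk
    have hbig : r * a + s * b = (r * a + s * b + c * (u * (x / g₂) + v * (y / g₁))) + c * w := by
      rw [← hk]; exact heq
    have h0 : c * (u * (x / g₂) + v * (y / g₁)) = 0 ∧ c * w = 0 := by omega
    have hw0 : w = 0 := by
      rcases Nat.mul_eq_zero.mp h0.2 with h | h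
      · omega
      · exact h
    have hK0 : u * (x / g₂) + v * (y / g₁) = 0 := by
      rcases Nat.mul_eq_zero.mp h0.1 with h | h
      · omega
      · exact h
    have hxq : x / g₂ = 0 := by
      have h := Nat.add_eq_zero.mp hK0
      rcases Nat.mul_eq_zero.mp h.1 with h' | h'
      · omega
      · exact h'
    have hyq : y / g₁ = 0 := by
      have h := Nat.add_eq_zero.mp hK0
      rcases Nat.mul_eq_zero.mp h.2 with h' | h'
      · omega
      · exact h'
    refine ⟨hw0, ?_, ?_⟩
    · have hd := Nat.div_add_mod x g₂
      rw [hxq, mul_zero] at hd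
      omega
    · have hd := Nat.div_add_mod y g₁
      rw [hyq, mul_zero] at hd
      omega
  -- Apéry membership of small combinations
  have apry : ∀ r s : ℕ, r < g₂ → s < g₁ →
      (r * a + s * b ∈ tripleSG a b c ∧ ¬∃ t ∈ tripleSG a b c, r * a + s * b = t + c) := by
    intro r s hr hs
    constructor
    · exact ⟨r, s, 0, by ring⟩
    · rintro ⟨t, ⟨x, y, z, hxyz⟩, hteq⟩
      have heq : r * a + s * b = a * x + b * y + c * (z + 1) := by
        rw [hteq, hxyz]; ring
      have := key r s x y (z + 1) hr hs heq
      omega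
  -- uniqueness mod c
  have inj : ∀ r s r' s' : ℕ, r < g₂ → s < g₁ → r' < g₂ → s' < g₁ →
      (r * a + s * b) % c = (r' * a + s' * b) % c → r = r' ∧ s = s' := by
    intro r s r' s' hr hs hr' hs' hmod
    rcases le_total (r * a + s * b) (r' * a + s' * b) with hle | hle
    · obtain ⟨w, hw⟩ := (Nat.modEq_iff_dvd' hle).mp hmod
      have heq : r' * a + s' * b = a * r + b * s + c * w := by
        have h5 := Nat.add_sub_cancel' hle
        rw [hw] at h5
        linarith
      have := key r' s' r s w hr' hs' heq
      omega
    · obtain ⟨w, hw⟩ := (Nat.modEq_iff_dvd' hle).mp hmod.symm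
      have heq : r * a + s * b = a * r' + b * s' + c * w := by
        have h5 := Nat.add_sub_cancel' hle
        rw [hw] at h5
        linarith
      have := key r s r' s' w hr hs heq
      omega
  -- surjectivity of residues
  have surj : ∀ n : ℕ, ∃ r s : ℕ, r < g₂ ∧ s < g₁ ∧ n % c = (r * a + s * b) % c := by
    intro n
    set f : ℕ × ℕ → ℕ := fun p => (p.1 * a + p.2 * b) % c with hf
    set T : Finset (ℕ × ℕ) := Finset.range g₂ ×ˢ Finset.range g₁ with hT
    have hinjon : Set.InjOn f ↑T := by
      intro p hp q hq hpq
      simp only [hT, Finset.coe_product, Set.mem_prod, Finset.mem_coe, Finset.mem_range] at hp hq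
      have := inj p.1 p.2 q.1 q.2 hp.1 hp.2 hq.1 hq.2 hpq
      exact Prod.ext this.1 this.2
    have hsub : T.image f ⊆ Finset.range c := by
      intro m hm
      obtain ⟨p, _, hp⟩ := Finset.mem_image.mp hm
      rw [Finset.mem_range, ← hp]
      exact Nat.mod_lt _ hc
    have hcard : (T.image f).card = c := by
      rw [Finset.card_image_of_injOn hinjon, hT, Finset.card_product, Finset.card_range,
        Finset.card_range, hceq]
      ring
    have heqset : T.image f = Finset.range c :=
      Finset.eq_of_subset_of_card_le hsub (by rw [hcard, Finset.card_range])
    have hmem : n % c ∈ T.image f := by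
      rw [heqset, Finset.mem_range]; exact Nat.mod_lt _ hc
    obtain ⟨p, hpT, hpf⟩ := Finset.mem_image.mp hmem
    simp only [hT, Finset.mem_product, Finset.mem_range] at hpT
    exact ⟨p.1, p.2, hpT.1, hpT.2, hpf.symm⟩
  -- everything large enough is in the semigroup
  have claim2 : ∀ n : ℕ, (g₂ - 1) * a + (g₁ - 1) * b < n + c → n ∈ tripleSG a b c := by
    intro n hn
    obtain ⟨r, s, hr, hs, hmod⟩ := surj n
    have hm_le : r * a + s * b ≤ (g₂ - 1) * a + (g₁ - 1) * b :=
      Nat.add_le_add (Nat.mul_le_mul_right a (by omega)) (Nat.mul_le_mul_right b (by omega))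
    have hge : r * a + s * b ≤ n := by
      by_contra hlt
      push_neg at hlt
      obtain ⟨k, hk⟩ := (Nat.modEq_iff_dvd' (le_of_lt hlt)).mp hmod
      have hkpos : 0 < k := by
        rcases Nat.eq_zero_or_pos k with h | h
        · exfalso; rw [h, mul_zero] at hk; omega
        · exact h
      have hck : c ≤ c * k := Nat.le_mul_of_pos_right c hkpos
      omega
    obtain ⟨k, hk⟩ := (Nat.modEq_iff_dvd' hge).mp hmod.symm
    refine ⟨r, s, k, ?_⟩
    have hn' : n = r * a + s * b + c * k := by omega
    rw [hn']; ring
  refine ⟨hcop, hceq, ?_, ?_, ?_⟩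
  · -- set equality
    ext m
    simp only [Set.mem_setOf_eq]
    constructor
    · rintro ⟨⟨x, y, z, hxyz⟩, hno⟩
      rcases z with _ | z'
      · -- z = 0
        have hk := reduce x y
        set k := u * (x / g₂) + v * (y / g₁) with hkdef
        set r := x % g₂ with hrdef
        set s := y % g₁ with hsdef
        have hrlt : r < g₂ := Nat.mod_lt _ hg2pos
        have hslt : s < g₁ := Nat.mod_lt _ hg1pos
        have hm : m = r * a + s * b + c * k := by rw [hxyz, ← hk]; ring
        have hk0 : k = 0 := by
          by_contra hne
          rcases k with _ | k'
          · exact hne rfl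
          refine hno ⟨r * a + s * b + c * k', ⟨r, s, k', by ring⟩, ?_⟩
          rw [hm, Nat.mul_succ]
          ring
        exact ⟨r, s, hrlt, hslt, by rw [hm, hk0]; ring⟩
      · -- z = z' + 1 : contradiction
        exfalso
        refine hno ⟨a * x + b * y + c * z', ⟨x, y, z', rfl⟩, ?_⟩
        rw [hxyz, Nat.mul_succ]
        ring
    · rintro ⟨r, s, hr, hs, hm⟩
      obtain ⟨h1, h2⟩ := apry r s hr hs
      rw [hm]
      exact ⟨h1, h2⟩
  · -- uniqueness
    intro r s r' s' hr hs hr' hs' heq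
    exact inj r s r' s' hr hs hr' hs' (by rw [heq])
  · -- Frobenius number
    intro F hF
    obtain ⟨hFnot, hFub⟩ := hF
    simp only [Set.mem_setOf_eq] at hFnot
    have h1 : F + c ≤ (g₂ - 1) * a + (g₁ - 1) * b := by
      by_contra h
      push_neg at h
      exact hFnot (claim2 F h)
    have h2 : (g₂ - 1) * a + (g₁ - 1) * b ≤ F + c := by
      by_contra h
      push_neg at h
      have hmem : (g₂ - 1) * a + (g₁ - 1) * b - c ∈ tripleSG a b c := by
        by_contra hns
        have := hFub (Set.mem_setOf_eq ▸ hns)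
        omega
      have h3 := (apry (g₂ - 1) (g₁ - 1) (by omega) (by omega)).2
      exact h3 ⟨(g₂ - 1) * a + (g₁ - 1) * b - c, hmem, by omega⟩
    omega
end
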